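/- arXiv:1103.2045 — 8 statements merged into one kernel-verified Lean document; each statement's English description precedes it below -/
import Mathlib

section
/- The map (M, ∘, e, ε, ∇̃) → (M, *, ε, e, ∇^F), where X*Y := X∘Y∘ε^{-1} and ∇^F is the second structure connection of (M, ∘, e, ε, ∇̃), is an involution on the set of F-manifolds (M, ∘, e, ε, ∇̃) with an eventual identity ε and a compatible, torsion-free connection ∇̃ satisfying ∇̃_X(e) = (1/2)[ε^{-1}, ε] ∘ X for all vector fields X. In particular, ∇^F satisfies the corresponding condition on (M, *, ε) (namely ∇^F_X(ε) = (1/2)[e^{-1,*}, e]*X, where e^{-1,*} = ε∘ε), and ∇̃ is the second structure connection of (M, *, ε, e, ∇^F). -/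
/-- An algebraic model of the geometric setting of the paper: `R` plays the role
of the ring `C^∞(M)` of smooth functions on a manifold `M`, and `V` plays the
role of the `C^∞(M)`-module of smooth vector fields on `M`, equipped with its
Lie bracket and with the action of vector fields on functions by derivations. -/
structure SmoothSetting (R V : Type*) [CommRing R] [LieRing V] [Module R V] where
  /-- the action `X(f)` of a vector field `X` on a function `f` -/
  deriv : V → R → R
  deriv_add : ∀ (X : V) (f g : R), deriv X (f + g) = deriv X f + deriv X g
  deriv_mul : ∀ (X : V) (f g : R), deriv X (f * g) = deriv X f * g + f * deriv X g
  add_deriv : ∀ (X Y : V) (f : R), deriv (X + Y) f = deriv X f + deriv Y f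
  smul_deriv : ∀ (f : R) (X : V) (g : R), deriv (f • X) g = f * deriv X g
  bracket_deriv : ∀ (X Y : V) (f : R),
    deriv ⁅X, Y⁆ f = deriv X (deriv Y f) - deriv Y (deriv X f)
  bracket_smul : ∀ (X : V) (f : R) (Y : V), ⁅X, f • Y⁆ = f • ⁅X, Y⁆ + deriv X f • Y

/-- `(m, e)` is an F-manifold structure: `m` is a fiber-preserving (i.e.
`C^∞(M)`-bilinear) commutative associative multiplication on vector fields with
unit field `e`, satisfying the Hertling–Manin integrability condition
`L_{X∘Y}(∘) = X ∘ L_Y(∘) + Y ∘ L_X(∘)`. -/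
structure IsFManifold (R : Type*) {V : Type*} [CommRing R] [LieRing V] [Module R V]
    (m : V → V → V) (e : V) : Prop where
  add_left : ∀ X Y Z : V, m (X + Y) Z = m X Z + m Y Z
  smul_left : ∀ (f : R) (X Y : V), m (f • X) Y = f • m X Y
  comm : ∀ X Y : V, m X Y = m Y X
  assoc : ∀ X Y Z : V, m (m X Y) Z = m X (m Y Z)
  unit : ∀ X : V, m e X = X
  hertling_manin : ∀ X Y Z W : V,
    ⁅m X Y, m Z W⁆ - m ⁅m X Y, Z⁆ W - m Z ⁅m X Y, W⁆ =
      m X (⁅Y, m Z W⁆ - m ⁅Y, Z⁆ W - m Z ⁅Y, W⁆)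
        + m Y (⁅X, m Z W⁆ - m ⁅X, Z⁆ W - m Z ⁅X, W⁆)

/-- The dual multiplication `X * Y := X ∘ Y ∘ ε⁻¹` determined by an invertible
vector field `ε` with inverse `εinv`. -/
def dualMul {V : Type*} (m : V → V → V) (εinv : V) : V → V → V :=
  fun X Y => m (m X Y) εinv

/-- `ε` (with inverse `εinv`) is an eventual identity on the F-manifold `(m, e)`:
it is invertible and the dual multiplication `X * Y = X ∘ Y ∘ ε⁻¹` defines an
F-manifold structure on `M` with unit field `ε`. -/
def IsEventualIdentity (R : Type*) {V : Type*} [CommRing R] [LieRing V] [Module R V]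
    (m : V → V → V) (e ε εinv : V) : Prop :=
  m ε εinv = e ∧ IsFManifold R (dualMul m εinv) ε

/-- `nabla` is a (Koszul) connection on the tangent bundle, i.e. on vector fields. -/
structure IsConnection {R V : Type*} [CommRing R] [LieRing V] [Module R V]
    (S : SmoothSetting R V) (nabla : V → V → V) : Prop where
  add_left : ∀ X Y Z : V, nabla (X + Y) Z = nabla X Z + nabla Y Z
  smul_left : ∀ (f : R) (X Y : V), nabla (f • X) Y = f • nabla X Y
  add_right : ∀ X Y Z : V, nabla X (Y + Z) = nabla X Y + nabla X Z
  leibniz : ∀ (X : V) (f : R) (Y : V), nabla X (f • Y) = S.deriv X f • Y + f • nabla X Y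

/-- `nabla` is torsion-free. -/
def IsTorsionFree {V : Type*} [LieRing V] (nabla : V → V → V) : Prop :=
  ∀ X Y, nabla X Y - nabla Y X = ⁅X, Y⁆

/-- The covariant derivative `∇_X(∘)(Y, Z)` of a multiplication `m` with respect
to a connection `nabla`. -/
def covMul {V : Type*} [LieRing V] (nabla m : V → V → V) (X Y Z : V) : V :=
  nabla X (m Y Z) - m (nabla X Y) Z - m Y (nabla X Z)

/-- `nabla` is compatible with the multiplication `m`: the vector valued tensor
`∇(∘)` is totally symmetric. -/
def IsCompatible {V : Type*} [LieRing V] (nabla m : V → V → V) : Prop :=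
  ∀ X Y Z, covMul nabla m X Y Z = covMul nabla m Y X Z ∧
    covMul nabla m X Y Z = covMul nabla m X Z Y

/-- The curvature `R^∇_{X,Y}Z = ∇_X∇_Y Z − ∇_Y∇_X Z − ∇_{[X,Y]}Z`. -/
def curv {V : Type*} [LieRing V] (nabla : V → V → V) (X Y Z : V) : V :=
  nabla X (nabla Y Z) - nabla Y (nabla X Z) - nabla ⁅X, Y⁆ Z

/-- `nabla` is flat. -/
def IsFlat {V : Type*} [LieRing V] (nabla : V → V → V) : Prop :=
  ∀ X Y Z, curv nabla X Y Z = 0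

/-- The curvature condition
`V∘R_{Z,Y}X + Y∘R_{V,Z}X + Z∘R_{Y,V}X = 0` of Lorenzoni–Pedroni. -/
def CurvCircCond {V : Type*} [LieRing V] (m nabla : V → V → V) : Prop :=
  ∀ X Y Z W, m W (curv nabla Z Y X) + m Y (curv nabla W Z X)
    + m Z (curv nabla Y W X) = 0

/-- A special family of connections on the F-manifold `(m, e)`: the family of
all `∇̃^V_X(Y) = ∇̃_X(Y) + V∘X∘Y`, `V` a vector field, where `∇̃` is some
torsion-free connection compatible with `m`. -/
def IsSpecialFamily {R V : Type*} [CommRing R] [LieRing V] [Module R V]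
    (S : SmoothSetting R V) (m : V → V → V) (SF : Set (V → V → V)) : Prop :=
  ∃ nt : V → V → V, IsConnection S nt ∧ IsTorsionFree nt ∧ IsCompatible nt m ∧
    SF = { n | ∃ W : V, n = fun X Y => nt X Y + m (m W X) Y }

/-- The connection `∇^W_X(Y) = ε∘∇̃_X(ε⁻¹∘Y) − ∇̃_{ε⁻¹∘Y}(ε)∘X + W*X*Y` on the
dual F-manifold, where `*` is the dual multiplication. -/
def dualConn {V : Type*} [LieRing V] (m : V → V → V) (ε εinv : V)
    (nt : V → V → V) (W : V) : V → V → V :=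
  fun X Y => m ε (nt X (m εinv Y)) - m (nt (m εinv Y) ε) X
    + dualMul m εinv (dualMul m εinv W X) Y

/-- The dual family `D_ε(S̃)` built from a chosen connection `nt ∈ S̃`. -/
def dualFamily {V : Type*} [LieRing V] (m : V → V → V) (ε εinv : V)
    (nt : V → V → V) : Set (V → V → V) :=
  { n | ∃ W : V, n = dualConn m ε εinv nt W }

/-- The dual family `D_ε(S̃)` of a family of connections `S̃`. -/
def dualFamilyOfSet {V : Type*} [LieRing V] (m : V → V → V) (ε εinv : V)
    (SF : Set (V → V → V)) : Set (V → V → V) :=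
  { n | ∃ nt ∈ SF, ∃ W : V, n = dualConn m ε εinv nt W }

/-- The second structure connection
`∇^F_X(Y) = ε∘∇̃_X(ε⁻¹∘Y) − ∇̃_{ε⁻¹∘Y}(ε)∘X` of `(M, ∘, e, ε, ∇̃)`. -/
def secondConn {V : Type*} [LieRing V] (m : V → V → V) (ε εinv : V)
    (nt : V → V → V) : V → V → V :=
  fun X Y => m ε (nt X (m εinv Y)) - m (nt (m εinv Y) ε) X

/-- The connection
`∇_X(Y) = ε∘∇̃_X(ε⁻¹∘Y) − ∇̃_{ε⁻¹∘Y}(ε)∘X + (1/2)[ε⁻¹,ε]∘X∘Y + U*X*Y`. -/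
def uDualConn {V : Type*} [LieRing V] [Module ℚ V] (m : V → V → V)
    (ε εinv U : V) (nt : V → V → V) : V → V → V :=
  fun X Y => secondConn m ε εinv nt X Y + (2 : ℚ)⁻¹ • m (m ⁅εinv, ε⁆ X) Y
    + dualMul m εinv (dualMul m εinv U X) Y

/-- The `k`-th power `X^k` of a vector field with respect to the multiplication
`m` with unit `e`. -/
def mpow {V : Type*} (m : V → V → V) (e X : V) : ℕ → V
  | 0 => e
  | k + 1 => m X (mpow m e X k)

/-- The Legendre transformation `L_u(S̃) = { u⁻¹∘∇̃_X(u∘Y) : ∇̃ ∈ S̃ }` of a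
family of connections `S̃` by an invertible vector field `u` (with inverse
`uinv`). -/
def legFamily {V : Type*} (m : V → V → V) (uinv u : V)
    (SF : Set (V → V → V)) : Set (V → V → V) :=
  { n | ∃ nt ∈ SF, n = fun X Y => m uinv (nt X (m u Y)) }

/-!
The product `∘` makes the vector fields a commutative ring with unit `e`, and every claim
becomes an identity in that ring between brackets, values of `∇̃` and the tensor `∇̃(∘)`.
The one differential input is the characterisation `L_ε(∘) = [e, ε] ∘ (·) ∘ (·)` of eventual
identities, which follows from the Hertling–Manin condition for `*` at `X = Y = ε`; together
with `L_e(∘) = 0` it also determines `L_{ε⁻¹}(∘)`.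

Writing vector fields as `ε ∘ x`, torsion-freeness of `∇^F` reduces to that of `∇̃` through
`[ε∘x, ε∘y] = ε∘[ε∘x, y] + ε∘[x, ε∘y] − ε∘ε∘[x, y]`, and `∇^F(*)` is expressed through
`∇̃(∘)`, whose total symmetry and Leibniz rule in the direction slot give that of `∇^F(*)`.
Dualising twice returns `∇̃` exactly when `∇̃_Y e = [ε⁻¹, ε∘Y] − ε∘[ε⁻¹, Y]`, and the
right-hand side is `(1/2) [ε⁻¹, ε] ∘ Y`.
-/

section

variable {R V : Type*} [CommRing R] [LieRing V] [Module R V] {m nt : V → V → V} {e ε εinv : V}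

namespace IsFManifold

theorem add_right (hF : IsFManifold R m e) (X Y Z : V) : m X (Y + Z) = m X Y + m X Z := by
  rw [hF.comm X, hF.add_left, hF.comm Y, hF.comm Z]

theorem smul_right (hF : IsFManifold R m e) (f : R) (X Y : V) : m X (f • Y) = f • m X Y := by
  rw [hF.comm, hF.smul_left, hF.comm]

-- The additive group is that of `V`, so ring identities in `∘` mix freely with brackets.
abbrev commRing (hF : IsFManifold R m e) : CommRing V :=
  { (inferInstance : AddCommGroup V) with
    mul := m, one := e
    mul_assoc := hF.assoc, mul_comm := hF.comm, one_mul := hF.unit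
    mul_one := fun X => (hF.comm X e).trans (hF.unit X)
    right_distrib := hF.add_left
    left_distrib := hF.add_right
    zero_mul := fun X => by
      change m 0 X = 0
      simpa using hF.add_left 0 0 X
    mul_zero := fun X => by
      change m X 0 = 0
      simpa [hF.comm X 0] using hF.add_left 0 0 X }

theorem apply_eq_mul (hF : IsFManifold R m e) (X Y : V) :
    m X Y = (letI := hF.commRing; X * Y) := rfl

theorem unit_eq_one (hF : IsFManifold R m e) : e = (letI := hF.commRing; 1) := rfl

theorem mul_inv_mul_cancel (hF : IsFManifold R m e) (hinv : m ε εinv = e) (X : V) :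
    m ε (m εinv X) = X := by
  rw [← hF.assoc, hinv, hF.unit]

theorem inv_mul_mul_cancel (hF : IsFManifold R m e) (hinv : m ε εinv = e) (X : V) :
    m εinv (m ε X) = X := by
  rw [← hF.assoc, hF.comm εinv, hinv, hF.unit]

theorem lie_unit_mul (hF : IsFManifold R m e) (Z W : V) :
    ⁅e, m Z W⁆ = m ⁅e, Z⁆ W + m Z ⁅e, W⁆ := by
  have h := hF.hertling_manin e e Z W
  let _ := hF.commRing
  simp only [hF.apply_eq_mul, hF.unit_eq_one, one_mul] at h ⊢
  linear_combination -h

theorem covMul_cocycle (hF : IsFManifold R m e) (nabla : V → V → V) (X Y W Z : V) :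
    covMul nabla m X (m Y W) Z + m (covMul nabla m X Y W) Z =
      covMul nabla m X Y (m W Z) + m Y (covMul nabla m X W Z) := by
  let _ := hF.commRing
  simp only [covMul, hF.apply_eq_mul]
  rw [mul_assoc]
  ring

end IsFManifold

theorem dualMul_dualMul (hF : IsFManifold R m e) (hinv : m ε εinv = e) :
    dualMul (dualMul m εinv) (m ε ε) = m := by
  funext X Y
  let _ := hF.commRing
  simp only [dualMul, hF.apply_eq_mul, hF.unit_eq_one] at hinv ⊢
  linear_combination (X * Y * (εinv * ε + 1)) * hinv

theorem IsFManifold.isEventualIdentity_dualMul (hF : IsFManifold R m e) (hinv : m ε εinv = e) :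
    IsEventualIdentity R (dualMul m εinv) ε e (m ε ε) := by
  refine ⟨?_, (dualMul_dualMul hF hinv).symm ▸ hF⟩
  let _ := hF.commRing
  simp only [dualMul, hF.apply_eq_mul, hF.unit_eq_one] at hinv ⊢
  linear_combination ε * hinv

namespace IsEventualIdentity

theorem lie_mul (hF : IsFManifold R m e) (hε : IsEventualIdentity R m e ε εinv) (Z W : V) :
    ⁅ε, m Z W⁆ - m ⁅ε, Z⁆ W - m Z ⁅ε, W⁆ = m (m ⁅e, ε⁆ Z) W := by
  have hinv := hε.1
  have hdual := hε.2.hertling_manin ε ε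
  simp only [hε.2.unit] at hdual
  let _ := hF.commRing
  simp only [dualMul, hF.apply_eq_mul, hF.unit_eq_one] at hinv hdual ⊢
  -- the Hertling–Manin condition for `(*, ε)` at `X = Y = ε` says `L_ε(*) = 2 L_ε(*)`
  have hLie (Z W : V) : ⁅ε, Z * W * εinv⁆ - ⁅ε, Z⁆ * W * εinv - Z * ⁅ε, W⁆ * εinv = 0 := by
    linear_combination -hdual Z W
  have hunit (Y : V) : ⁅ε, Y⁆ - ε * ⁅ε, Y * εinv⁆ = -(⁅ε, 1⁆ * Y) := by
    have h := hLie 1 Y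
    simp only [one_mul] at h
    linear_combination (-ε) * h - (⁅ε, 1⁆ * Y + ⁅ε, Y⁆) * hinv
  linear_combination hunit (Z * W) + ε * hLie Z W + (⁅ε, Z⁆ * W + Z * ⁅ε, W⁆) * hinv
    + (Z * W) * (lie_skew ε 1)

theorem lie_mul_mul (hF : IsFManifold R m e) (hε : IsEventualIdentity R m e ε εinv)
    (X Y : V) :
    ⁅m ε X, m ε Y⁆ = m ε ⁅m ε X, Y⁆ + m ε ⁅X, m ε Y⁆ - m (m ε ε) ⁅X, Y⁆ := by
  have hHM := hF.hertling_manin ε X ε Y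
  have hX := hε.lie_mul hF ε X
  have hY := hε.lie_mul hF ε Y
  let _ := hF.commRing
  simp only [hF.apply_eq_mul, hF.unit_eq_one] at hHM hX hY ⊢
  linear_combination hHM - Y * lie_skew ε (ε * X) - Y * hX + X * hY + (ε * Y) * lie_skew ε X
    - X * Y * lie_self ε

theorem lie_inv_mul_left [Module ℚ V] (hF : IsFManifold R m e)
    (hε : IsEventualIdentity R m e ε εinv) (Y : V) :
    ⁅εinv, m ε Y⁆ - m ε ⁅εinv, Y⁆ = (2 : ℚ)⁻¹ • m ⁅εinv, ε⁆ Y := by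
  have hinv := hε.1
  have hHM := hF.hertling_manin ε εinv ε Y
  have hunit := hF.lie_unit_mul ε Y
  have hεY := hε.lie_mul hF ε Y
  have hεε := hε.lie_mul hF εinv ε
  rw [hinv] at hHM
  rw [hF.comm εinv, hinv] at hεε
  refine (eq_inv_smul_iff₀ two_ne_zero).2 ?_
  rw [two_smul]
  let _ := hF.commRing
  simp only [hF.apply_eq_mul, hF.unit_eq_one] at hinv hHM hunit hεY hεε ⊢
  -- `0 = L_{ε∘ε⁻¹}(∘) = ε ∘ L_{ε⁻¹}(∘) + ε⁻¹ ∘ L_ε(∘)`, and `[ε, ε⁻¹] ∘ ε = 2 [ε, e]`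
  linear_combination (-2 * εinv) * hHM + (2 * εinv) * hunit - (2 * εinv * εinv) * hεY
    + (-(εinv * ⁅(1 : V), ε⁆ * Y) - 2 * (⁅εinv, ε * Y⁆ - ⁅εinv, ε⁆ * Y - ε * ⁅εinv, Y⁆)
      + ⁅ε, εinv⁆ * Y) * hinv
    + (εinv * Y) * lie_skew (1 : V) ε + (εinv * εinv * Y) * lie_self ε + (εinv * Y) * hεε
    - Y * lie_skew ε εinv

end IsEventualIdentity

namespace IsCompatible

theorem covMul_swap₁₃ (hcm : IsCompatible nt m) (X Y Z : V) :
    covMul nt m X Y Z = covMul nt m Z Y X := by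
  rw [(hcm X Y Z).1, (hcm Y X Z).2, (hcm Y Z X).1]

theorem covMul_mul_left (hcm : IsCompatible nt m) (hF : IsFManifold R m e)
    (u x y z : V) :
    covMul nt m (m u x) y z =
      covMul nt m u (m x y) z - m y (covMul nt m u x z) + m u (covMul nt m x y z) := by
  have hy := hF.covMul_cocycle nt y u x z
  have hu := hF.covMul_cocycle nt u y x z
  rw [(hcm y u (m x z)).1, (hcm y x z).1, (hcm y u x).1, ← (hcm (m u x) y z).1] at hy
  rw [hF.comm y x] at hu
  let _ := hF.commRing
  simp only [hF.apply_eq_mul] at hy hu ⊢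
  linear_combination hy - hu

end IsCompatible

theorem IsConnection.secondConn {S : SmoothSetting R V} (hc : IsConnection S nt)
    (hF : IsFManifold R m e) (hinv : m ε εinv = e) :
    IsConnection S (secondConn m ε εinv nt) where
  add_left X Y Z := by
    simp only [_root_.secondConn, hc.add_left]
    let _ := hF.commRing
    simp only [hF.apply_eq_mul]
    ring
  smul_left f X Y := by
    simp only [_root_.secondConn, hc.smul_left, hF.smul_right, smul_sub]
  add_right X Y Z := by
    simp only [_root_.secondConn]
    let _ := hF.commRing
    simp only [hF.apply_eq_mul, mul_add, hc.add_right, hc.add_left]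
    ring
  leibniz X f Y := by
    simp only [_root_.secondConn, hF.smul_right, hc.leibniz, hc.smul_left, hF.smul_left,
      hF.add_right, hF.mul_inv_mul_cancel hinv, smul_sub, add_sub_assoc]

theorem IsTorsionFree.secondConn (htf : IsTorsionFree nt) (hF : IsFManifold R m e)
    (hε : IsEventualIdentity R m e ε εinv) (hcm : IsCompatible nt m) :
    IsTorsionFree (secondConn m ε εinv nt) := by
  intro X Y
  obtain ⟨x, rfl⟩ : ∃ x, X = m ε x := ⟨_, (hF.mul_inv_mul_cancel hε.1 X).symm⟩
  obtain ⟨y, rfl⟩ : ∃ y, Y = m ε y := ⟨_, (hF.mul_inv_mul_cancel hε.1 Y).symm⟩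
  simp only [_root_.secondConn, hF.inv_mul_mul_cancel hε.1]
  have hxy := htf x y
  have hεxy := htf (m ε x) y
  have hεyx := htf (m ε y) x
  have hsymm := hcm.covMul_swap₁₃ x ε y
  have hlie := hε.lie_mul_mul hF x y
  simp only [covMul] at hsymm
  let _ := hF.commRing
  simp only [hF.apply_eq_mul] at hxy hεxy hεyx hsymm hlie ⊢
  linear_combination ε * hεxy - ε * hεyx - ε * hsymm - ε * ε * hxy - hlie
    + ε * lie_skew x (ε * y)

theorem covMul_secondConn_dualMul (hF : IsFManifold R m e)
    (hε : IsEventualIdentity R m e ε εinv) (htf : IsTorsionFree nt) (x y z : V) :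
    covMul (secondConn m ε εinv nt) (dualMul m εinv) (m ε x) (m ε y) (m ε z) =
      m ε (covMul nt m (m ε x) y z) - m (m ε x) (covMul nt m ε y z)
        + m (m (m ⁅e, ε⁆ (m ε x)) y) z := by
  have hinv := hε.1
  have hyz : m εinv (dualMul m εinv (m ε y) (m ε z)) = m y z := by
    let _ := hF.commRing
    simp only [dualMul, hF.apply_eq_mul, hF.unit_eq_one] at hinv ⊢
    linear_combination (y * z * (ε * εinv + 1)) * hinv
  simp only [covMul, _root_.secondConn, hyz, hF.inv_mul_mul_cancel hinv]
  have hεyz := htf ε (m y z)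
  have hεy := htf ε y
  have hεz := htf ε z
  have hlie := hε.lie_mul hF y z
  let _ := hF.commRing
  simp only [dualMul, hF.apply_eq_mul, hF.unit_eq_one] at hinv hεyz hεy hεz hlie ⊢
  linear_combination (ε * x) * hεyz - (ε * x * z) * hεy - (ε * x * y) * hεz + (ε * x) * hlie
    + (ε * x * z * nt y ε + ε * x * y * nt z ε - ε * z * nt (ε * x) y
      - ε * y * nt (ε * x) z) * hinv

theorem IsCompatible.secondConn (hcm : IsCompatible nt m) (hF : IsFManifold R m e)
    (hε : IsEventualIdentity R m e ε εinv) (htf : IsTorsionFree nt) :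
    IsCompatible (secondConn m ε εinv nt) (dualMul m εinv) := by
  intro X Y Z
  obtain ⟨x, rfl⟩ : ∃ x, X = m ε x := ⟨_, (hF.mul_inv_mul_cancel hε.1 X).symm⟩
  obtain ⟨y, rfl⟩ : ∃ y, Y = m ε y := ⟨_, (hF.mul_inv_mul_cancel hε.1 Y).symm⟩
  obtain ⟨z, rfl⟩ : ∃ z, Z = m ε z := ⟨_, (hF.mul_inv_mul_cancel hε.1 Z).symm⟩
  simp only [covMul_secondConn_dualMul hF hε htf]
  constructor
  · rw [hcm.covMul_mul_left hF, hcm.covMul_mul_left hF, hF.comm y x, (hcm x y z).1]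
    let _ := hF.commRing
    simp only [hF.apply_eq_mul]
    ring
  · rw [(hcm (m ε x) y z).2, (hcm ε y z).2]
    let _ := hF.commRing
    simp only [hF.apply_eq_mul]
    ring

variable [Module ℚ V]

theorem secondConn_apply_eventualIdentity (hF : IsFManifold R m e) (hinv : m ε εinv = e)
    (htf : IsTorsionFree nt) (hU : ∀ X : V, nt X e = (2 : ℚ)⁻¹ • m ⁅εinv, ε⁆ X) (X : V) :
    secondConn m ε εinv nt X ε = (2 : ℚ)⁻¹ • dualMul m εinv ⁅m ε ε, e⁆ X := by
  have hU2 (Y : V) : nt Y e + nt Y e = m ⁅εinv, ε⁆ Y := by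
    rw [← two_smul ℚ, ← (eq_inv_smul_iff₀ two_ne_zero).1 (hU Y)]
  have hUX := hU2 X
  have hUε := hU2 ε
  have htor := htf e ε
  have hunit := hF.lie_unit_mul ε ε
  rw [eq_inv_smul_iff₀ two_ne_zero, two_smul, _root_.secondConn, hF.comm εinv, hinv]
  let _ := hF.commRing
  simp only [dualMul, hF.apply_eq_mul, hF.unit_eq_one] at hinv hUX hUε htor hunit ⊢
  linear_combination ε * hUX - X * hUε - 2 * X * htor + (X * εinv) * lie_skew (1 : V) (ε * ε)
    + (X * εinv) * hunit + 2 * X * ⁅(1 : V), ε⁆ * hinv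

theorem secondConn_secondConn (hF : IsFManifold R m e)
    (hε : IsEventualIdentity R m e ε εinv) (htf : IsTorsionFree nt) (hcm : IsCompatible nt m)
    (hU : ∀ X : V, nt X e = (2 : ℚ)⁻¹ • m ⁅εinv, ε⁆ X) :
    secondConn (dualMul m εinv) e (m ε ε) (secondConn m ε εinv nt) = nt := by
  have hinv := hε.1
  funext X Y
  have hεY : dualMul m εinv (m ε ε) Y = m ε Y := by
    let _ := hF.commRing
    simp only [dualMul, hF.apply_eq_mul, hF.unit_eq_one] at hinv ⊢
    linear_combination (ε * Y) * hinv
  have hK : m εinv (nt Y ε) + nt (m ε Y) εinv - m Y (nt εinv ε) = 0 := by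
    have htor := htf (m ε Y) εinv
    have htor' := htf εinv Y
    have hsymm := hcm.covMul_swap₁₃ εinv ε Y
    have hlie := (hε.lie_inv_mul_left hF Y).trans (hU Y).symm
    simp only [covMul, hinv] at hsymm
    let _ := hF.commRing
    simp only [hF.apply_eq_mul, hF.unit_eq_one] at hinv htor htor' hsymm hlie ⊢
    linear_combination htor + hsymm + ε * htor' - hlie - lie_skew εinv (ε * Y)
  simp only [_root_.secondConn, hεY, hF.inv_mul_mul_cancel hinv]
  let _ := hF.commRing
  simp only [dualMul, hF.apply_eq_mul, hF.unit_eq_one, mul_one, one_mul] at hinv hK ⊢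
  linear_combination (-X) * hK + (nt X Y - X * nt (ε * Y) εinv + X * Y * nt εinv ε) * hinv

end

/-- **Proposition 6.4.** The map
`(M, ∘, e, ε, ∇̃) ↦ (M, *, ε, e, ∇^F)`, with `∇^F` the second structure
connection, is an involution on F-manifolds with an eventual identity `ε` and a
compatible torsion-free connection `∇̃` satisfying
`∇̃_X(e) = (1/2)[ε⁻¹, ε]∘X`. In particular `∇^F` is a torsion-free connection
compatible with `*` satisfying `∇^F_X(ε) = (1/2)[e^{-1,*}, e]*X` (where
`e^{-1,*} = ε∘ε`), and `∇̃` is the second structure connection of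
`(M, *, ε, e, ∇^F)`. -/
theorem statement12 {R V : Type*} [CommRing R] [LieRing V] [Module R V] [Module ℚ V]
    (S : SmoothSetting R V) (m : V → V → V) (e ε εinv : V)
    (nt : V → V → V)
    (hF : IsFManifold R m e) (hev : IsEventualIdentity R m e ε εinv)
    (hc : IsConnection S nt) (htf : IsTorsionFree nt) (hcm : IsCompatible nt m)
    (hU : ∀ X : V, nt X e = (2 : ℚ)⁻¹ • m ⁅εinv, ε⁆ X) :
    IsFManifold R (dualMul m εinv) ε ∧
      IsEventualIdentity R (dualMul m εinv) ε e (m ε ε) ∧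
      IsConnection S (secondConn m ε εinv nt) ∧
      IsTorsionFree (secondConn m ε εinv nt) ∧
      IsCompatible (secondConn m ε εinv nt) (dualMul m εinv) ∧
      (∀ X : V, secondConn m ε εinv nt X ε =
        (2 : ℚ)⁻¹ • dualMul m εinv ⁅m ε ε, e⁆ X) ∧
      dualMul (dualMul m εinv) (m ε ε) = m ∧
      secondConn (dualMul m εinv) e (m ε ε) (secondConn m ε εinv nt) = nt :=
  ⟨hev.2, hF.isEventualIdentity_dualMul hev.1, hc.secondConn hF hev.1, htf.secondConn hF hev hcm,
    hcm.secondConn hF hev htf, secondConn_apply_eventualIdentity hF hev.1 htf hU,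
    dualMul_dualMul hF hev.1, secondConn_secondConn hF hev htf hcm hU⟩
end

section
/- Let (M, ∘, e, ∇̃) be an F-manifold with a compatible, torsion-free connection ∇̃ whose curvature satisfies V∘R^∇̃_{Z,Y}X + Y∘R^∇̃_{V,Z}X + Z∘R^∇̃_{Y,V}X = 0 for all vector fields X, Y, Z, V. Let A be any section of End(TM), ε any invertible vector field (not necessarily an eventual identity), and define the connection ∇^A_X(Y) := ε∘∇̃_X(ε^{-1}∘Y) + A(Y)∘X. Then the curvature of ∇^A also satisfies V∘R^{∇^A}_{Z,Y}X + Y∘R^{∇^A}_{V,Z}X + Z∘R^{∇^A}_{Y,V}X = 0 for all vector fields X, Y, Z, V. -/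
/-- **Proposition 7.2.** Let `(M, ∘, e, ∇̃)` be an F-manifold
with a compatible torsion-free connection whose curvature satisfies
`V∘R_{Z,Y}X + Y∘R_{V,Z}X + Z∘R_{Y,V}X = 0`. Let `A` be a section of `End(TM)`
and `ε` an invertible vector field (not necessarily an eventual identity).
Then the curvature of `∇^A_X(Y) = ε∘∇̃_X(ε⁻¹∘Y) + A(Y)∘X` satisfies the same
condition. -/
theorem statement13 {R V : Type*} [CommRing R] [LieRing V] [Module R V]
    (S : SmoothSetting R V) (m : V → V → V) (e : V)
    (hF : IsFManifold R m e)
    (nt : V → V → V) (hc : IsConnection S nt) (htf : IsTorsionFree nt)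
    (hcm : IsCompatible nt m)
    (hcurv : CurvCircCond m nt)
    (A : V →ₗ[R] V) (ε εinv : V) (hinv : m ε εinv = e) :
    CurvCircCond m (fun X Y => m ε (nt X (m εinv Y)) + m (A Y) X) := by
  obtain ⟨madd, msmul, mcomm, massoc, munit, -⟩ := hF
  obtain ⟨-, -, ntar, -⟩ := hc
  have maddr : ∀ a b c : V, m a (b + c) = m a b + m a c := by
    intro a b c; rw [mcomm, madd, mcomm b a, mcomm c a]
  have mneg : ∀ a b : V, m a (-b) = -(m a b) := by
    intro a b
    rw [← neg_one_smul R b, mcomm, msmul, mcomm, neg_one_smul]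
  have msub : ∀ a b c : V, m a (b - c) = m a b - m a c := by
    intro a b c; rw [sub_eq_add_neg, maddr, mneg, ← sub_eq_add_neg]
  have mzero : ∀ a : V, m a 0 = 0 := by
    intro a
    have h := maddr a 0 0
    rw [add_zero] at h
    exact left_eq_add.mp h
  have h1 : ∀ v : V, m εinv (m ε v) = v := by
    intro v; rw [← massoc, mcomm εinv ε, hinv, munit]
  have h2 : ∀ v : V, m ε (m εinv v) = v := by
    intro v; rw [← massoc, hinv, munit]
  have swap3 : ∀ a p q : V, m a (m p q) = m p (m q a) := by
    intro a p q; rw [mcomm, massoc]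
  have hswap : ∀ a t : V, m a (m ε t) = m ε (m a t) := by
    intro a t; rw [← massoc, mcomm a ε, massoc]
  intro X Y Z W
  have e1 : ∀ T : V,
      m εinv (m ε (nt T (m εinv X)) + m (A X) T)
        = nt T (m εinv X) + m (m εinv (A X)) T := by
    intro T
    rw [maddr, h1, ← massoc]
  have compat2 : ∀ P Q : V,
      covMul nt m P (m εinv (A X)) Q = covMul nt m Q (m εinv (A X)) P := by
    intro P Q
    rw [(hcm P (m εinv (A X)) Q).1, (hcm (m εinv (A X)) P Q).2,
      (hcm (m εinv (A X)) Q P).1]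
  have hmix : ∀ P Q : V,
      nt P (m (m εinv (A X)) Q) - nt Q (m (m εinv (A X)) P)
        = m (nt P (m εinv (A X))) Q - m (nt Q (m εinv (A X))) P
          + m (m εinv (A X)) ⁅P, Q⁆ := by
    intro P Q
    have h := compat2 P Q
    simp only [covMul] at h
    rw [← htf P Q, msub]
    have h' : nt P (m (m εinv (A X)) Q)
        = nt Q (m (m εinv (A X)) P) - m (nt Q (m εinv (A X))) P
            - m (m εinv (A X)) (nt Q P)
          + m (nt P (m εinv (A X))) Q + m (m εinv (A X)) (nt P Q) := by
      rw [← h]; abel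
    rw [h']; abel
  have hmix2 : ∀ P Q : V,
      m ε (nt P (m (m εinv (A X)) Q))
        = m (m ε (nt P (m εinv (A X)))) Q - m (m ε (nt Q (m εinv (A X)))) P
          + m (A X) ⁅P, Q⁆ + m ε (nt Q (m (m εinv (A X)) P)) := by
    intro P Q
    have h := congrArg (m ε) (hmix P Q)
    rw [msub, maddr, msub,
      ← massoc ε (nt P (m εinv (A X))) Q,
      ← massoc ε (nt Q (m εinv (A X))) P,
      ← massoc ε (m εinv (A X)) ⁅P, Q⁆, h2 (A X)] at h
    rw [← h]; abel
  have key : ∀ P Q : V,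
      curv (fun X Y => m ε (nt X (m εinv Y)) + m (A Y) X) P Q X
        = m ε (curv nt P Q (m εinv X))
          + (m (m ε (nt P (m εinv (A X)))) Q - m (m ε (nt Q (m εinv (A X)))) P)
          + (m (A (m ε (nt Q (m εinv X)) + m (A X) Q)) P
              - m (A (m ε (nt P (m εinv X)) + m (A X) P)) Q) := by
    intro P Q
    simp only [curv]
    rw [e1 Q, e1 P, ntar, ntar, maddr ε, maddr ε, msub ε, msub ε, hmix2 P Q]
    abel
  rw [key Z Y, key W Z, key Y W]
  simp only [maddr, msub]
  rw [hswap W (curv nt Z Y (m εinv X)), hswap Y (curv nt W Z (m εinv X)),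
    hswap Z (curv nt Y W (m εinv X)),
    swap3 W (m ε (nt Z (m εinv (A X)))) Y, swap3 W (m ε (nt Y (m εinv (A X)))) Z,
    swap3 W (A (m ε (nt Y (m εinv X)) + m (A X) Y)) Z,
    swap3 W (A (m ε (nt Z (m εinv X)) + m (A X) Z)) Y,
    swap3 Y (m ε (nt W (m εinv (A X)))) Z, swap3 Y (m ε (nt Z (m εinv (A X)))) W,
    swap3 Y (A (m ε (nt Z (m εinv X)) + m (A X) Z)) W,
    swap3 Y (A (m ε (nt W (m εinv X)) + m (A X) W)) Z,
    swap3 Z (m ε (nt Y (m εinv (A X)))) W, swap3 Z (m ε (nt W (m εinv (A X)))) Y,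
    swap3 Z (A (m ε (nt W (m εinv X)) + m (A X) W)) Y,
    swap3 Z (A (m ε (nt Y (m εinv X)) + m (A X) Y)) W]
  simp only [mcomm W Y, mcomm W Z, mcomm Y Z]
  have hfin : m ε (m W (curv nt Z Y (m εinv X))) + m ε (m Y (curv nt W Z (m εinv X)))
      + m ε (m Z (curv nt Y W (m εinv X))) = 0 := by
    rw [← maddr, ← maddr, hcurv (m εinv X) Y Z W, mzero]
  rw [← hfin]
  abel
end

section
/- Let (M, ∘, e) be an F-manifold with an eventual identity ε and a special family S̃, let X*Y := X∘Y∘ε^{-1} and let S = D_ε(S̃) be the dual special family on (M, *, ε). For any ∇̃ ∈ S̃ and any ∇ ∈ S, the condition V∘R^∇̃_{Z,Y}X + Y∘R^∇̃_{V,Z}X + Z∘R^∇̃_{Y,V}X = 0 (for all vector fields X, Y, Z, V) holds if and only if V*R^∇_{Z,Y}X + Y*R^∇_{V,Z}X + Z*R^∇_{Y,V}X = 0 (for all vector fields X, Y, Z, V). In particular, whether this curvature condition holds is independent of the choice of connection within a special family, and the duality of special families preserves it. -/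
/-! With `∘` as multiplication, vector fields form a commutative ring with unit `e`, and the
argument is pure algebra. Changing a connection by a term `ψ(Y)∘X` changes `R_{A,C}X` by
`∇_A(w∘C) − ∇_C(w∘A) − w∘[A,C]` (with `w = ψ(X)`) plus terms of the form `A∘P(C) − C∘P(A)`.
When `∇` is torsion-free and compatible with `∘`, the first expression is of the second form too,
and all such terms cancel in the cyclic sum `V∘R_{Z,Y}X + Y∘R_{V,Z}X + Z∘R_{Y,V}X`. The shifts
`V∘X∘Y` in a special family are changes of this kind. So is the dual connection, after
conjugation by `ε`, which turns `R_{A,C}X` into `ε∘R_{A,C}(ε⁻¹∘X)`. Since `V*R = V∘R∘ε⁻¹` and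
`ε⁻¹` is invertible, the two cyclic conditions are equivalent. -/

abbrev IsFManifold.commRing_s14 {R V : Type*} [CommRing R] [LieRing V] [Module R V]
    {m : V → V → V} {e : V} (hF : IsFManifold R m e) : CommRing V :=
  have zero_mul : ∀ a : V, m 0 a = 0 := fun a => by
    simpa using hF.add_left 0 0 a
  { (inferInstance : AddCommGroup V) with
    mul := m
    mul_assoc := hF.assoc
    one := e
    one_mul := hF.unit
    mul_one := fun a => (hF.comm a e).trans (hF.unit a)
    mul_comm := hF.comm
    left_distrib := fun a b c => show m a (b + c) = m a b + m a c by
      rw [hF.comm a (b + c), hF.add_left, hF.comm b a, hF.comm c a]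
    right_distrib := hF.add_left
    zero_mul := zero_mul
    mul_zero := fun a => (hF.comm a 0).trans (zero_mul a) }

section CommRing

/- `A` stands for the vector fields with `∘` as ring multiplication and `b` for the Lie bracket;
`curvature`, `mulCov` and `dualConnection` are `curv`, `covMul` and `dualConn` in this language,
with `E, F` in the roles of `ε, ε⁻¹`. -/

variable {A : Type*} [CommRing A] {b n : A → A → A}

def curvature (b n : A → A → A) (x y z : A) : A :=
  n x (n y z) - n y (n x z) - n (b x y) z

def cyclicCurvature (b n : A → A → A) (x y z v : A) : A :=
  v * curvature b n z y x + y * curvature b n v z x + z * curvature b n y v x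

def mulCov (n : A → A → A) (x y z : A) : A :=
  n x (y * z) - n x y * z - y * n x z

def shiftConnection (n : A → A → A) (u : A) : A → A → A :=
  fun p q => n p q + u * p * q

def conjConnection (n : A → A → A) (E F : A) : A → A → A :=
  fun p q => E * n p (F * q)

def dualConnection (n : A → A → A) (E F W : A) : A → A → A :=
  fun p q => E * n p (F * q) - n (F * q) E * p + W * p * F * q * F

structure IsCompatibleTorsionFree (b n : A → A → A) : Prop where
  add_left : ∀ x y z, n (x + y) z = n x z + n y z
  add_right : ∀ x y z, n x (y + z) = n x y + n x z
  torsion_free : ∀ x y, n x y - n y x = b x y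
  mulCov_comm : ∀ x y z, mulCov n x y z = mulCov n y x z
  mulCov_swap : ∀ x y z, mulCov n x y z = mulCov n x z y

theorem cyclicCurvature_eq_of_curvature_eq {n' : A → A → A} {E x x' : A} (P : A → A)
    (h : ∀ a c, curvature b n' a c x = E * curvature b n a c x' + (a * P c - c * P a))
    (y z v : A) :
    cyclicCurvature b n' x y z v = E * cyclicCurvature b n x' y z v := by
  simp only [cyclicCurvature, h]
  ring

theorem curvature_add_mul_left (G : A → A → A) (ψ : A → A)
    (hG : ∀ p q r, G p (q + r) = G p q + G p r) (hψ : ∀ q r, ψ (q + r) = ψ q + ψ r)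
    (a c x : A) :
    curvature b (fun p q => G p q + ψ q * p) a c x =
      curvature b G a c x + (G a (ψ x * c) - G c (ψ x * a) - ψ x * b a c)
        + (a * (ψ (G c x) + ψ (ψ x * c)) - c * (ψ (G a x) + ψ (ψ x * a))) := by
  simp only [curvature, hG, hψ]
  ring

theorem curvature_conjConnection {E F : A} (hFE : F * E = 1) (a c x : A) :
    curvature b (conjConnection n E F) a c x = E * curvature b n a c (F * x) := by
  have cancel : ∀ t, F * (E * t) = t := fun t => by rw [← mul_assoc, hFE, one_mul]
  simp only [curvature, conjConnection, cancel]
  ring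

theorem dualConnection_shiftConnection (w E F W : A) :
    dualConnection (shiftConnection n w) E F W = dualConnection n E F W := by
  funext p q
  simp only [dualConnection, shiftConnection]
  ring

theorem dualConnection_eq_conjConnection_add {E F : A} (hEF : E * F = 1) (W : A) :
    dualConnection n E F W =
      fun p q => conjConnection (shiftConnection n (W * F * F)) E F p q + -n (F * q) E * p := by
  funext p q
  simp only [dualConnection, conjConnection, shiftConnection]
  linear_combination (-(W * F * F * p * q)) * hEF

theorem mulCov_shiftConnection (u x y z : A) :
    mulCov (shiftConnection n u) x y z = mulCov n x y z - u * x * y * z := by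
  simp only [mulCov, shiftConnection]
  ring

namespace IsCompatibleTorsionFree

variable (H : IsCompatibleTorsionFree b n)
include H

theorem apply_mul_sub_apply_mul (w a c : A) :
    n a (w * c) - n c (w * a) = c * n a w - a * n c w + w * b a c := by
  have h := (H.mulCov_comm a w c).trans ((H.mulCov_swap w a c).trans (H.mulCov_comm w c a))
  simp only [mulCov] at h
  linear_combination h + w * H.torsion_free a c

protected theorem shiftConnection (u : A) : IsCompatibleTorsionFree b (shiftConnection n u) where
  add_left x y z := by simp only [shiftConnection, H.add_left]; ring
  add_right x y z := by simp only [shiftConnection, H.add_right]; ring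
  torsion_free x y := by simp only [shiftConnection]; linear_combination H.torsion_free x y
  mulCov_comm x y z := by simp only [mulCov_shiftConnection, H.mulCov_comm x y z]; ring
  mulCov_swap x y z := by simp only [mulCov_shiftConnection, H.mulCov_swap x y z]; ring

theorem cyclicCurvature_shiftConnection (u x y z v : A) :
    cyclicCurvature b (shiftConnection n u) x y z v = cyclicCurvature b n x y z v := by
  have hshift : shiftConnection n u = fun p q => n p q + u * q * p := by
    funext p q
    simp only [shiftConnection]
    ring
  simpa using cyclicCurvature_eq_of_curvature_eq (E := 1)
    (fun t => u * (n t x + u * x * t) - n t (u * x)) (fun a c => by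
      rw [hshift, curvature_add_mul_left n (u * ·) H.add_right (fun q r => mul_add u q r)]
      linear_combination H.apply_mul_sub_apply_mul (u * x) a c) y z v

theorem cyclicCurvature_dualConnection {E F : A} (hEF : E * F = 1) (W x y z v : A) :
    cyclicCurvature b (dualConnection n E F W) x y z v =
      E * cyclicCurvature b n (F * x) y z v := by
  rw [dualConnection_eq_conjConnection_add hEF, ← H.cyclicCurvature_shiftConnection (W * F * F)]
  set N := shiftConnection n (W * F * F)
  have HN : IsCompatibleTorsionFree b N := H.shiftConnection _
  have hG : ∀ p q r,
      conjConnection N E F p (q + r) = conjConnection N E F p q + conjConnection N E F p r := by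
    intro p q r
    simp only [conjConnection, mul_add, HN.add_right]
  have hψ : ∀ q r, -n (F * (q + r)) E = -n (F * q) E + -n (F * r) E := by
    intro q r
    rw [mul_add, H.add_left, neg_add]
  refine cyclicCurvature_eq_of_curvature_eq
    (fun t => -n (F * conjConnection N E F t x) E + -n (F * (-n (F * x) E * t)) E
      - E * N t (F * -n (F * x) E)) (fun a c => ?_) y z v
  rw [curvature_add_mul_left _ (fun q => -n (F * q) E) hG hψ,
    curvature_conjConnection (by rw [mul_comm, hEF])]
  have key := HN.apply_mul_sub_apply_mul (F * -n (F * x) E) a c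
  simp only [conjConnection, mul_assoc] at key ⊢
  linear_combination E * key - (n (F * x) E * b a c) * hEF

theorem cyclicCurvature_eq_zero_iff_dual {E F : A} (hEF : E * F = 1) (w w' W : A) :
    (∀ x y z v, cyclicCurvature b (shiftConnection n w) x y z v = 0) ↔
      ∀ x y z v,
        v * curvature b (dualConnection (shiftConnection n w') E F W) z y x * F
          + y * curvature b (dualConnection (shiftConnection n w') E F W) v z x * F
          + z * curvature b (dualConnection (shiftConnection n w') E F W) y v x * F = 0 := by
  have hdual : ∀ x y z v,
      v * curvature b (dualConnection n E F W) z y x * F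
        + y * curvature b (dualConnection n E F W) v z x * F
        + z * curvature b (dualConnection n E F W) y v x * F
        = cyclicCurvature b n (F * x) y z v := by
    intro x y z v
    have h := H.cyclicCurvature_dualConnection hEF W x y z v
    simp only [cyclicCurvature] at h ⊢
    linear_combination F * h + (v * curvature b n z y (F * x) + y * curvature b n v z (F * x)
      + z * curvature b n y v (F * x)) * hEF
  simp only [dualConnection_shiftConnection, hdual, H.cyclicCurvature_shiftConnection]
  constructor
  · exact fun h x => h (F * x)
  · intro h x
    simpa [← mul_assoc, mul_comm F E, hEF] using h (E * x)

end IsCompatibleTorsionFree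

end CommRing

/-- **Theorem 7.1.** Let `(M, ∘, e)` be an F-manifold with an
eventual identity `ε` and special family `S̃`, and `S = D_ε(S̃)` its dual. For
any `∇̃ ∈ S̃` and any `∇ ∈ S`, the curvature condition
`V∘R^∇̃_{Z,Y}X + Y∘R^∇̃_{V,Z}X + Z∘R^∇̃_{Y,V}X = 0` holds iff
`V*R^∇_{Z,Y}X + Y*R^∇_{V,Z}X + Z*R^∇_{Y,V}X = 0` holds. -/
theorem statement14 {R V : Type*} [CommRing R] [LieRing V] [Module R V]
    (S : SmoothSetting R V) (m : V → V → V) (e ε εinv : V)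
    (hF : IsFManifold R m e) (hev : IsEventualIdentity R m e ε εinv)
    (SF : Set (V → V → V)) (hSF : IsSpecialFamily S m SF)
    (nt : V → V → V) (hnt : nt ∈ SF)
    (nd : V → V → V) (hnd : nd ∈ dualFamilyOfSet m ε εinv SF) :
    CurvCircCond m nt ↔ CurvCircCond (dualMul m εinv) nd := by
  obtain ⟨hunit, -⟩ := hev
  obtain ⟨n, hn, htf, hcomp, rfl⟩ := hSF
  obtain ⟨w, rfl⟩ := hnt
  obtain ⟨_, ⟨w', rfl⟩, W, rfl⟩ := hnd
  let _ : CommRing V := hF.commRing_s14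
  have H : IsCompatibleTorsionFree (fun X Y : V => ⁅X, Y⁆) n :=
    ⟨hn.add_left, hn.add_right, htf, fun X Y Z => (hcomp X Y Z).1,
      fun X Y Z => (hcomp X Y Z).2⟩
  exact H.cyclicCurvature_eq_zero_iff_dual hunit w w' W
end

section
/- Let ∇̃ and ∇̃^V be two torsion-free connections on an F-manifold (M, ∘, e), both compatible with ∘, related by ∇̃^V_X(Y) = ∇̃_X(Y) + V∘X∘Y for a vector field V. Assume ∇̃ is flat. Then ∇̃^V is flat if and only if ∇̃_X(C_V)(Y) ∘ Z = ∇̃_Z(C_V)(Y) ∘ X for all vector fields X, Y, Z, where C_V is the endomorphism C_V(X) = V∘X of TM and ∇̃_X(C_V)(Y) := ∇̃_X(V∘Y) − V∘∇̃_X(Y). -/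
/-- **Lemma 8.1.** Let `∇̃` and `∇̃^V_X(Y) = ∇̃_X(Y) + V∘X∘Y` be
torsion-free connections on an F-manifold `(M, ∘, e)`, compatible with `∘`, and
assume `∇̃` is flat. Then `∇̃^V` is flat iff
`∇̃_X(C_V)(Y)∘Z = ∇̃_Z(C_V)(Y)∘X` for all `X, Y, Z`, where
`∇̃_X(C_V)(Y) = ∇̃_X(V∘Y) − V∘∇̃_X(Y)`. -/
theorem statement15 {R V : Type*} [CommRing R] [LieRing V] [Module R V]
    (S : SmoothSetting R V) (m : V → V → V) (e : V)
    (hF : IsFManifold R m e)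
    (nt : V → V → V) (hc : IsConnection S nt) (htf : IsTorsionFree nt)
    (hcm : IsCompatible nt m) (W : V) (hflat : IsFlat nt) :
    IsFlat (fun X Y => nt X Y + m (m W X) Y) ↔
      ∀ X Y Z : V, m (nt X (m W Y) - m W (nt X Y)) Z =
        m (nt Z (m W Y) - m W (nt Z Y)) X := by

  have madd : ∀ a b c : V, m (a + b) c = m a c + m b c := hF.add_left
  have mneg : ∀ a b : V, m (-a) b = - m a b := by
    intro a b
    rw [← neg_one_smul R a, hF.smul_left, neg_one_smul]
  have msub : ∀ a b c : V, m (a - b) c = m a c - m b c := by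
    intro a b c
    rw [sub_eq_add_neg, madd, mneg, ← sub_eq_add_neg]
  have maddr : ∀ a b c : V, m a (b + c) = m a b + m a c := by
    intro a b c
    rw [hF.comm, madd, hF.comm b, hF.comm c]
  have cms : ∀ A B C : V, covMul nt m A B C = covMul nt m C B A := by
    intro A B C
    rw [(hcm A B C).2, (hcm A C B).1, (hcm C A B).2]
  have key : ∀ X Y Z : V,
      curv (fun X Y => nt X Y + m (m W X) Y) X Y Z =
        m (nt X (m W Z) - m W (nt X Z)) Y - m (nt Y (m W Z) - m W (nt Y Z)) X := by
    intro X Y Z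
    have swapZ : ∀ A B : V, m (m W A) B = m (m W B) A := by
      intro A B
      rw [hF.assoc, hF.comm A B, ← hF.assoc]
    have expand : ∀ A B : V, nt A (m (m W B) Z) =
        covMul nt m A (m W Z) B + m (nt A (m W Z)) B + m (m W Z) (nt A B) := by
      intro A B
      rw [swapZ B Z]
      simp only [covMul]
      abel
    have hfl : nt X (nt Y Z) = nt Y (nt X Z) + nt ⁅X, Y⁆ Z := by
      have h := hflat X Y Z
      simp only [curv] at h
      rw [sub_sub, sub_eq_zero] at h
      exact h
    have hbr : m (m W Z) (nt X Y) = m (m W Z) (nt Y X) + m (m W Z) ⁅X, Y⁆ := by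
      rw [← maddr]
      congr 1
      have h := htf X Y
      rw [sub_eq_iff_eq_add] at h
      rw [h]
      abel
    have h4 : m (m W X) (m (m W Y) Z) = m (m W Y) (m (m W X) Z) := by
      rw [← hF.assoc, hF.comm (m W X) (m W Y), hF.assoc]
    simp only [curv, msub]
    rw [hc.add_right X, hc.add_right Y, maddr (m W X), maddr (m W Y),
      expand X Y, expand Y X, cms Y (m W Z) X, hfl, hbr, h4,
      swapZ ⁅X, Y⁆ Z, swapZ X (nt Y Z), swapZ Y (nt X Z)]
    abel
  constructor
  · intro h X Y Z
    have hk := key X Z Y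
    rw [h X Z Y] at hk
    have := (sub_eq_zero.mp hk.symm).symm
    rw [this]
  · intro h X Y Z
    rw [key X Y Z, sub_eq_zero]
    exact h X Z Y
end

section
/- Let (M, ∘, e) be an F-manifold with an eventual identity ε and a special family S̃ containing a flat connection ∇̃, and let X*Y := X∘Y∘ε^{-1}. Then the dual family D_ε(S̃) on the dual F-manifold (M, *, ε) contains a flat connection if and only if there is a vector field W̃ such that for all vector fields X, Y, Z: ( ∇̃²_{X,Y}(ε) − ∇̃_X(C_W̃)(Y) ) ∘ Z = ( ∇̃²_{Z,Y}(ε) − ∇̃_Z(C_W̃)(Y) ) ∘ X. Moreover, if this condition holds, the connection ∇^W_X(Y) := ε∘∇̃_X(ε^{-1}∘Y) − ∇̃_{ε^{-1}∘Y}(ε)∘X + W*X*Y with W := W̃∘ε is flat and belongs to D_ε(S̃). -/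
/-!
Under the F-manifold product, vector fields form a commutative ring, and all the
identities below become ring identities between values of `∇̃`. Put
`L := ∇̃ε − C_W̃` and `B_X(k) := ∇̃_X k − X∘L(k)∘ε⁻¹`. The dual connection with
`W = W̃∘ε` is `∇^W_X(Y) = ε∘B_X(ε⁻¹∘Y)`, and flatness of `∇̃`, total symmetry of
`∇̃(∘)` and the invariance `L_ε(*) = 0` of the dual product give
`ε∘R^B_{X,Y}(k) = ∇̃_Y(L)(k)∘X − ∇̃_X(L)(k)∘Y`, where
`∇̃_X(L)(Y) = ∇̃²_{X,Y}(ε) − ∇̃_X(C_W̃)(Y)`. So `∇^W` is flat exactly when the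
stated symmetry holds, and every member of `D_ε(S̃)` is some `∇^{W̃∘ε}`.
-/

namespace RingConn

variable {A : Type*} [CommRing A] {D : A → A → A} {ε u : A}

def covProd (D : A → A → A) (x a b : A) : A := D x (a * b) - D x a * b - a * D x b

structure IsCompatibleConn (D : A → A → A) : Prop where
  add_left : ∀ x y z, D (x + y) z = D x z + D y z
  add_right : ∀ x y z, D x (y + z) = D x y + D x z
  covProd_comm : ∀ x a b, covProd D x a b = covProd D a x b

theorem covProd_add_mul_mul (D : A → A → A) (W x a b : A) :
    covProd (fun X Y => D X Y + W * X * Y) x a b = covProd D x a b - W * x * a * b := by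
  unfold covProd
  ring

theorem IsCompatibleConn.sub_left (hD : IsCompatibleConn D) (x y z : A) :
    D (x - y) z = D x z - D y z :=
  map_sub (AddMonoidHom.mk' (D · z) (hD.add_left · · z)) x y

theorem IsCompatibleConn.sub_right (hD : IsCompatibleConn D) (x y z : A) :
    D x (y - z) = D x y - D x z :=
  map_sub (AddMonoidHom.mk' (D x) (hD.add_right x)) y z

/-- `L_ε(*) = 0` for the dual product `z * w = z w u`, the Lie bracket being
`⁅a, b⁆ = D a b - D b a`. -/
def IsDualMulInvariant (D : A → A → A) (ε u : A) : Prop :=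
  ∀ z w, D ε (z * w * u) - D (z * w * u) ε
    = (D ε z - D z ε) * w * u + z * (D ε w - D w ε) * u

/-- The curvature of `N`, the Lie bracket being `⁅X, Y⁆ = D X Y - D Y X`. -/
def ringCurv (D N : A → A → A) (X Y Z : A) : A :=
  N X (N Y Z) - N Y (N X Z) - N (D X Y - D Y X) Z

def twistConn (D : A → A → A) (ε u Wt X k : A) : A := D X k - X * (D k ε - Wt * k) * u

def obstruction (D : A → A → A) (ε Wt X Y : A) : A :=
  D X (D Y ε) - D (D X Y) ε - (D X (Wt * Y) - Wt * D X Y)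

theorem eps_twist_identity (hD : IsCompatibleConn D) (hε : ε * u = 1)
    (hLie : IsDualMulInvariant D ε u) (X Y s : A) :
    ε * D Y (X * s * u) - ε * D X (Y * s * u) + X * D (Y * s * u) ε - Y * D (X * s * u) ε
      + (D X Y - D Y X) * s = D Y s * X - D X s * Y := by
  have hsu : ε * (s * u) = s := by linear_combination s * hε
  have hY := congrArg (D Y) hsu
  have hX := congrArg (D X) hsu
  have hsymm := hD.covProd_comm
  unfold covProd at hsymm
  -- `ring_nf` also normalizes the arguments of `D`, which supplies the associativity
  -- of the product inside `∇̃`.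
  linear_combination (norm := ring_nf)
    - X * hLie Y s + Y * hLie X s + X * hY - Y * hX
    - ε * hsymm X Y (s * u) + (ε * u - 1) * hsymm X Y s
    + X * hsymm ε Y (s * u) - Y * hsymm ε X (s * u)
    + (D Y (X * s) - D X (Y * s) - X * D Y s + Y * D X s) * hε

theorem eps_mul_ringCurv_twistConn (hD : IsCompatibleConn D) (hε : ε * u = 1)
    (hLie : IsDualMulInvariant D ε u) (hflat : ∀ x y z, ringCurv D D x y z = 0)
    (Wt X Y k : A) :
    ε * ringCurv D (twistConn D ε u Wt) X Y k
      = obstruction D ε Wt Y k * X - obstruction D ε Wt X k * Y := by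
  have key := eps_twist_identity hD hε hLie X Y (D k ε - Wt * k)
  have flat := hflat X Y k
  simp only [ringCurv, twistConn, obstruction, hD.sub_right, hD.sub_left] at key flat ⊢
  linear_combination ε * flat + key
    + (- X * D (D Y k) ε + Y * D (D X k) ε + X * D (Y * (D k ε - Wt * k) * u) ε
        - Y * D (X * (D k ε - Wt * k) * u) ε + X * Wt * D Y k - Y * Wt * D X k
        + (D X Y - D Y X) * (D k ε - Wt * k)) * hε

theorem ringCurv_conj (hε : ε * u = 1) (B : A → A → A) (X Y Z : A) :
    ringCurv D (fun X Y => ε * B X (u * Y)) X Y Z = ε * ringCurv D B X Y (u * Z) := by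
  have hu (a : A) : u * (ε * a) = a := by linear_combination a * hε
  simp only [ringCurv, hu]
  ring

end RingConn

open RingConn

section FManifold

variable {R V : Type*} [CommRing R] [LieRing V] [Module R V] {m : V → V → V} {e : V}

abbrev IsFManifold.toCommRing (hF : IsFManifold R m e) : CommRing V :=
  { (inferInstance : AddCommGroup V) with
    mul := m
    one := e
    mul_assoc := hF.assoc
    mul_comm := hF.comm
    one_mul := hF.unit
    mul_one a := (hF.comm a e).trans (hF.unit a)
    left_distrib a b c := by
      change m a (b + c) = m a b + m a c
      rw [hF.comm a, hF.add_left, hF.comm b, hF.comm c]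
    right_distrib := hF.add_left
    zero_mul a := by
      change m 0 a = 0
      simpa using hF.add_left 0 0 a
    mul_zero a := by
      change m a 0 = 0
      simpa [hF.comm a] using hF.add_left 0 0 a }

theorem IsFManifold.lie_unit_mul_s16 (hF : IsFManifold R m e) (Z W : V) :
    ⁅e, m Z W⁆ = m ⁅e, Z⁆ W + m Z ⁅e, W⁆ := by
  -- Hertling–Manin at `X = Y = e` says `T = T + T`, `T` the defect of the identity.
  have h := hF.hertling_manin e e Z W
  simp only [hF.unit] at h
  rw [← sub_eq_zero, sub_add_eq_sub_sub]
  simpa using h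

theorem IsFManifold.mul_mul_cancel_left (hF : IsFManifold R m e) {a b : V} (h : m a b = e)
    (Y : V) : m b (m a Y) = Y := by
  rw [← hF.assoc, hF.comm b, h, hF.unit]

theorem IsFManifold.mul_mul_cancel_right (hF : IsFManifold R m e) {a b : V} (h : m a b = e)
    (W : V) : m (m W b) a = W := by
  rw [hF.assoc, hF.comm b, h, hF.comm, hF.unit]

variable {S : SmoothSetting R V} {SF : Set (V → V → V)} {nt : V → V → V}

theorem IsSpecialFamily.isConnection_of_mem (hF : IsFManifold R m e)
    (hSF : IsSpecialFamily S m SF) (hnt : nt ∈ SF) : IsConnection S nt := by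
  obtain ⟨nt₀, hconn, -, -, rfl⟩ := hSF
  obtain ⟨W, rfl⟩ := hnt
  have hsmul (f : R) (X Y : V) : m X (f • Y) = f • m X Y := by
    rw [hF.comm, hF.smul_left, hF.comm]
  let := hF.toCommRing
  refine ⟨fun X Y Z => ?_, fun f X Y => ?_, fun X Y Z => ?_, fun X f Y => ?_⟩
  · change nt₀ (X + Y) Z + W * (X + Y) * Z = nt₀ X Z + W * X * Z + (nt₀ Y Z + W * Y * Z)
    rw [hconn.add_left]
    ring
  · change nt₀ (f • X) Y + m (m W (f • X)) Y = f • (nt₀ X Y + m (m W X) Y)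
    rw [hconn.smul_left, hsmul, hF.smul_left, smul_add]
  · change nt₀ X (Y + Z) + W * X * (Y + Z) = nt₀ X Y + W * X * Y + (nt₀ X Z + W * X * Z)
    rw [hconn.add_right]
    ring
  · change nt₀ X (f • Y) + m (m W X) (f • Y) = S.deriv X f • Y + f • (nt₀ X Y + m (m W X) Y)
    rw [hconn.leibniz, hsmul, smul_add, add_assoc]

theorem IsSpecialFamily.isTorsionFree_of_mem (hF : IsFManifold R m e)
    (hSF : IsSpecialFamily S m SF) (hnt : nt ∈ SF) : IsTorsionFree nt := by
  obtain ⟨nt₀, -, htf, -, rfl⟩ := hSF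
  obtain ⟨W, rfl⟩ := hnt
  let := hF.toCommRing
  intro X Y
  change nt₀ X Y + W * X * Y - (nt₀ Y X + W * Y * X) = ⁅X, Y⁆
  rw [← htf X Y]
  ring

theorem IsSpecialFamily.isCompatible_of_mem (hF : IsFManifold R m e)
    (hSF : IsSpecialFamily S m SF) (hnt : nt ∈ SF) : IsCompatible nt m := by
  obtain ⟨nt₀, -, -, hcomp, rfl⟩ := hSF
  obtain ⟨W, rfl⟩ := hnt
  let := hF.toCommRing
  intro X Y Z
  obtain ⟨h₁, h₂⟩ : covProd nt₀ X Y Z = covProd nt₀ Y X Z ∧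
      covProd nt₀ X Y Z = covProd nt₀ X Z Y := hcomp X Y Z
  have h := covProd_add_mul_mul nt₀ W
  change covProd (fun X Y => nt₀ X Y + W * X * Y) X Y Z
      = covProd (fun X Y => nt₀ X Y + W * X * Y) Y X Z ∧
    covProd (fun X Y => nt₀ X Y + W * X * Y) X Y Z
      = covProd (fun X Y => nt₀ X Y + W * X * Y) X Z Y
  rw [h, h, h, ← h₁, ← h₂]
  constructor <;> ring

variable {ε εinv : V}

theorem curv_dualConn (hF : IsFManifold R m e) (hev : IsEventualIdentity R m e ε εinv)
    (hconn : IsConnection S nt) (htf : IsTorsionFree nt) (hcomp : IsCompatible nt m)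
    (hflat : IsFlat nt) (Wt X Y Z : V) :
    curv (dualConn m ε εinv nt (m Wt ε)) X Y Z =
      m (nt Y (nt (m εinv Z) ε) - nt (nt Y (m εinv Z)) ε
          - (nt Y (m Wt (m εinv Z)) - m Wt (nt Y (m εinv Z)))) X
        - m (nt X (nt (m εinv Z) ε) - nt (nt X (m εinv Z)) ε
          - (nt X (m Wt (m εinv Z)) - m Wt (nt X (m εinv Z)))) Y := by
  let := hF.toCommRing
  have hD : IsCompatibleConn nt := ⟨hconn.add_left, hconn.add_right, fun x a b => (hcomp x a b).1⟩
  have hbr (x y : V) : ⁅x, y⁆ = nt x y - nt y x := (htf x y).symm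
  have hcurv (N : V → V → V) (X Y Z : V) : curv N X Y Z = ringCurv nt N X Y Z := by
    rw [curv, hbr]
    rfl
  have hε : ε * εinv = 1 := hev.1
  have hLie : IsDualMulInvariant nt ε εinv := fun z w => by
    have h := hev.2.lie_unit_mul_s16 z w
    simp only [hbr] at h
    exact h
  have hdual : dualConn m ε εinv nt (m Wt ε)
      = fun X Y => ε * twistConn nt ε εinv Wt X (εinv * Y) := by
    funext X Y
    change ε * nt X (εinv * Y) - nt (εinv * Y) ε * X + Wt * ε * X * εinv * Y * εinv
      = ε * (nt X (εinv * Y) - X * (nt (εinv * Y) ε - Wt * (εinv * Y)) * εinv)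
    linear_combination X * nt (εinv * Y) ε * hε
  rw [hcurv, hdual, ringCurv_conj hε]
  exact eps_mul_ringCurv_twistConn hD hε hLie
    (fun x y z => (hcurv nt x y z).symm.trans (hflat x y z)) Wt X Y (εinv * Z)

theorem isFlat_dualConn_iff (hF : IsFManifold R m e) (hev : IsEventualIdentity R m e ε εinv)
    (hconn : IsConnection S nt) (htf : IsTorsionFree nt) (hcomp : IsCompatible nt m)
    (hflat : IsFlat nt) (Wt : V) :
    IsFlat (dualConn m ε εinv nt (m Wt ε)) ↔
      ∀ X Y Z : V,
        m (nt X (nt Y ε) - nt (nt X Y) ε - (nt X (m Wt Y) - m Wt (nt X Y))) Z =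
          m (nt Z (nt Y ε) - nt (nt Z Y) ε - (nt Z (m Wt Y) - m Wt (nt Z Y))) X := by
  have hcurv := curv_dualConn hF hev hconn htf hcomp hflat Wt
  refine ⟨fun h X Y Z => ?_, fun h X Y Z => ?_⟩
  · have h₀ := hcurv Z X (m ε Y)
    rwa [h, hF.mul_mul_cancel_left hev.1, eq_comm, sub_eq_zero] at h₀
  · rw [hcurv, h Y (m εinv Z) X, sub_self]

end FManifold

/-- **Theorem 8.2.** Let `(M, ∘, e)` be an F-manifold with an
eventual identity `ε` and special family `S̃` containing a flat connection
`∇̃`. Then `D_ε(S̃)` contains a flat connection iff there is a vector field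
`W̃` with `(∇̃²_{X,Y}(ε) − ∇̃_X(C_W̃)(Y))∘Z = (∇̃²_{Z,Y}(ε) − ∇̃_Z(C_W̃)(Y))∘X`
for all `X, Y, Z`; and in that case the connection `∇^W` with `W = W̃∘ε` is
flat and belongs to `D_ε(S̃)`. -/
theorem statement16 {R V : Type*} [CommRing R] [LieRing V] [Module R V]
    (S : SmoothSetting R V) (m : V → V → V) (e ε εinv : V)
    (hF : IsFManifold R m e) (hev : IsEventualIdentity R m e ε εinv)
    (SF : Set (V → V → V)) (hSF : IsSpecialFamily S m SF)
    (nt : V → V → V) (hnt : nt ∈ SF) (hflat : IsFlat nt) :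
    ((∃ nd ∈ dualFamily m ε εinv nt, IsFlat nd) ↔
      ∃ Wt : V, ∀ X Y Z : V,
        m (nt X (nt Y ε) - nt (nt X Y) ε - (nt X (m Wt Y) - m Wt (nt X Y))) Z =
          m (nt Z (nt Y ε) - nt (nt Z Y) ε - (nt Z (m Wt Y) - m Wt (nt Z Y))) X) ∧
      ∀ Wt : V,
        (∀ X Y Z : V,
          m (nt X (nt Y ε) - nt (nt X Y) ε - (nt X (m Wt Y) - m Wt (nt X Y))) Z =
            m (nt Z (nt Y ε) - nt (nt Z Y) ε - (nt Z (m Wt Y) - m Wt (nt Z Y))) X) →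
        IsFlat (dualConn m ε εinv nt (m Wt ε)) ∧
          dualConn m ε εinv nt (m Wt ε) ∈ dualFamily m ε εinv nt := by
  have hflat_iff := isFlat_dualConn_iff hF hev (hSF.isConnection_of_mem hF hnt)
    (hSF.isTorsionFree_of_mem hF hnt) (hSF.isCompatible_of_mem hF hnt) hflat
  refine ⟨⟨?_, fun ⟨Wt, h⟩ => ⟨_, ⟨m Wt ε, rfl⟩, (hflat_iff Wt).2 h⟩⟩,
    fun Wt h => ⟨(hflat_iff Wt).2 h, m Wt ε, rfl⟩⟩
  rintro ⟨_, ⟨W, rfl⟩, hW⟩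
  refine ⟨m W εinv, (hflat_iff _).1 ?_⟩
  rwa [hF.mul_mul_cancel_right hev.1]
end

section
/- Let V → M be a smooth vector bundle, D a connection on V, A a 1-form on M with values in End(V) such that (d^D A)_{X,Y} := D_X(A_Y) − D_Y(A_X) − A_{[X,Y]} = 0 and A_X A_Y = A_Y A_X for all vector fields X, Y, and let u be a section of V with A_Y(D_Z u) = A_Z(D_Y u) for all Y, Z. Assume the map F: TM → V, F(X) := A_X(u), is a bundle isomorphism. Then: (i) the multiplication X∘Y := F^{-1}( A_X A_Y u ) on vector fields is commutative and associative with unit field F^{-1}(u); (ii) the pull-back connection (F*D)_X(Y) := F^{-1}( D_X( F(Y) ) ) is torsion-free and compatible with ∘, and in particular (M, ∘, F^{-1}(u)) is an F-manifold. -/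
section Pullback

variable {R V E : Type*} [CommRing R] [LieRing V] [Module R V] [AddCommGroup E] [Module R E]

def pullbackMul (A : V →ₗ[R] E →ₗ[R] E) (F : V ≃ₗ[R] E) : V →ₗ[R] V →ₗ[R] V :=
  (A.compl₂ (F : V →ₗ[R] E)).compr₂ (F.symm : E →ₗ[R] V)

def pullbackConn (D : V → E → E) (F : V ≃ₗ[R] E) : V → V → V :=
  fun X Y => F.symm (D X (F Y))

variable {A : V →ₗ[R] E →ₗ[R] E} {F : V ≃ₗ[R] E} {u : E}

@[simp]
lemma map_pullbackMul (X Y : V) : F (pullbackMul A F X Y) = A X (F Y) := by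
  simp [pullbackMul]

lemma apply_apply_comm (hAcomm : ∀ (X Y : V) (w : E), A X (A Y w) = A Y (A X w))
    (hF : ∀ X : V, F X = A X u) (X Y : V) : A X (F Y) = A Y (F X) := by
  rw [hF, hF, hAcomm]

lemma pullbackMul_comm (hAcomm : ∀ (X Y : V) (w : E), A X (A Y w) = A Y (A X w))
    (hF : ∀ X : V, F X = A X u) (X Y : V) : pullbackMul A F X Y = pullbackMul A F Y X :=
  F.injective <| by simp only [map_pullbackMul, apply_apply_comm hAcomm hF X Y]

lemma pullbackMul_assoc (hAcomm : ∀ (X Y : V) (w : E), A X (A Y w) = A Y (A X w))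
    (hF : ∀ X : V, F X = A X u) (X Y Z : V) :
    pullbackMul A F (pullbackMul A F X Y) Z = pullbackMul A F X (pullbackMul A F Y Z) :=
  F.injective <| by
    simp only [map_pullbackMul, apply_apply_comm hAcomm hF _ Z, hAcomm Z X]

lemma pullbackMul_symm_left (hAcomm : ∀ (X Y : V) (w : E), A X (A Y w) = A Y (A X w))
    (hF : ∀ X : V, F X = A X u) (X : V) : pullbackMul A F (F.symm u) X = X :=
  F.injective <| by rw [map_pullbackMul, apply_apply_comm hAcomm hF, F.apply_symm_apply, hF]

lemma sub_eq_map_lie (D : V → E → E)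
    (hdDA : ∀ (X Y : V) (w : E),
      D X (A Y w) - A Y (D X w) - (D Y (A X w) - A X (D Y w)) - A ⁅X, Y⁆ w = 0)
    (hu : ∀ Y Z : V, A Y (D Z u) = A Z (D Y u)) (hF : ∀ X : V, F X = A X u) (X Y : V) :
    D X (F Y) - D Y (F X) = F ⁅X, Y⁆ := by
  have h := hdDA X Y u
  rw [hu Y X, ← hF, ← hF, ← hF] at h
  rw [← sub_eq_zero, ← h]
  abel

lemma isTorsionFree_pullbackConn (D : V → E → E)
    (hdDA : ∀ (X Y : V) (w : E),
      D X (A Y w) - A Y (D X w) - (D Y (A X w) - A X (D Y w)) - A ⁅X, Y⁆ w = 0)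
    (hu : ∀ Y Z : V, A Y (D Z u) = A Z (D Y u)) (hF : ∀ X : V, F X = A X u) :
    IsTorsionFree (pullbackConn D F) := fun X Y => by
  rw [pullbackConn, pullbackConn, ← map_sub, sub_eq_map_lie D hdDA hu hF, F.symm_apply_apply]

lemma map_covMul_pullbackConn (D : V → E → E)
    (hAcomm : ∀ (X Y : V) (w : E), A X (A Y w) = A Y (A X w))
    (hF : ∀ X : V, F X = A X u) (X Y Z : V) :
    F (covMul (pullbackConn D F) (pullbackMul A F · ·) X Y Z) =
      D X (A Y (F Z)) - A Z (D X (F Y)) - A Y (D X (F Z)) := by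
  simp only [covMul, pullbackConn, map_sub, map_pullbackMul, F.apply_symm_apply]
  rw [apply_apply_comm hAcomm hF (F.symm _) Z, F.apply_symm_apply]

lemma isCompatible_pullbackConn (D : V → E → E)
    (hdDA : ∀ (X Y : V) (w : E),
      D X (A Y w) - A Y (D X w) - (D Y (A X w) - A X (D Y w)) - A ⁅X, Y⁆ w = 0)
    (hAcomm : ∀ (X Y : V) (w : E), A X (A Y w) = A Y (A X w))
    (hu : ∀ Y Z : V, A Y (D Z u) = A Z (D Y u)) (hF : ∀ X : V, F X = A X u) :
    IsCompatible (pullbackConn D F) (pullbackMul A F · ·) := by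
  intro X Y Z
  simp only [← F.injective.eq_iff, map_covMul_pullbackConn D hAcomm hF]
  constructor
  · have hZ : A Z (D X (F Y)) - A Z (D Y (F X)) = A ⁅X, Y⁆ (F Z) := by
      rw [← map_sub, sub_eq_map_lie D hdDA hu hF, apply_apply_comm hAcomm hF]
    rw [← sub_eq_zero, ← hdDA X Y (F Z), ← hZ]
    abel
  · rw [apply_apply_comm hAcomm hF Y Z]
    abel

end Pullback

section Hertling

variable {R V : Type*} [CommRing R] [LieRing V] [Module R V] {m : V →ₗ[R] V →ₗ[R] V}
  {n : V → V → V}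

/-- `L_X(∘)(Y, Z)`. -/
def lieDerivMul (m : V → V → V) (X Y Z : V) : V :=
  ⁅X, m Y Z⁆ - m ⁅X, Y⁆ Z - m Y ⁅X, Z⁆

lemma lieDerivMul_eq_covMul (htf : IsTorsionFree n) (X Y Z : V) :
    lieDerivMul (m · ·) X Y Z =
      covMul n (m · ·) X Y Z - n (m Y Z) X + m (n Y X) Z + m Y (n Z X) := by
  have hbracket (a b : V) : ⁅a, b⁆ = n a b - n b a := (htf a b).symm
  simp only [lieDerivMul, covMul, hbracket, map_sub, LinearMap.sub_apply]
  abel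

/-- `∇_X` applied to `(Y∘Z)∘W = Y∘(Z∘W)`. -/
lemma covMul_mul_add (hassoc : ∀ X Y Z, m (m X Y) Z = m X (m Y Z)) (X Y Z W : V) :
    covMul n (m · ·) X (m Y Z) W + m (covMul n (m · ·) X Y Z) W =
      covMul n (m · ·) X Y (m Z W) + m Y (covMul n (m · ·) X Z W) := by
  simp only [covMul, map_sub, LinearMap.sub_apply, hassoc]
  abel

lemma lieDerivMul_mul_sub (hcomm : ∀ X Y, m X Y = m Y X)
    (hassoc : ∀ X Y Z, m (m X Y) Z = m X (m Y Z)) (htf : IsTorsionFree n) (X Y Z W : V) :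
    lieDerivMul (m · ·) (m X Y) Z W - m X (lieDerivMul (m · ·) Y Z W)
        - m Y (lieDerivMul (m · ·) X Z W) =
      covMul n (m · ·) (m X Y) Z W - covMul n (m · ·) (m Z W) X Y
        + m (covMul n (m · ·) Z X Y) W + m Z (covMul n (m · ·) W X Y)
        - m X (covMul n (m · ·) Y Z W) - m Y (covMul n (m · ·) X Z W) := by
  have hleft_comm (X Y Z : V) : m X (m Y Z) = m Y (m X Z) := by
    rw [← hassoc, hcomm X Y, hassoc]
  have hn_mul (X Y Z : V) :
      n X (m Y Z) = covMul n (m · ·) X Y Z + m (n X Y) Z + m Y (n X Z) := by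
    rw [covMul]; abel
  simp only [lieDerivMul_eq_covMul htf, hn_mul, map_add, map_sub, LinearMap.add_apply, hassoc]
  simp only [hcomm, hleft_comm]
  abel

theorem lieDerivMul_mul (hcomm : ∀ X Y, m X Y = m Y X)
    (hassoc : ∀ X Y Z, m (m X Y) Z = m X (m Y Z)) (htf : IsTorsionFree n)
    (hc : IsCompatible n (m · ·)) (X Y Z W : V) :
    lieDerivMul (m · ·) (m X Y) Z W =
      m X (lieDerivMul (m · ·) Y Z W) + m Y (lieDerivMul (m · ·) X Z W) := by
  have hswap (X Y Z : V) : covMul n (m · ·) X Y Z = covMul n (m · ·) Y X Z := (hc X Y Z).1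
  have hswap' (X Y Z : V) : covMul n (m · ·) X Y Z = covMul n (m · ·) X Z Y := (hc X Y Z).2
  have h₁ := covMul_mul_add (n := n) hassoc Z W X Y
  have h₂ := covMul_mul_add (n := n) hassoc Y Z W X
  rw [← sub_eq_zero, ← sub_sub, lieDerivMul_mul_sub hcomm hassoc htf]
  simp only [hswap, hswap', hcomm] at h₁ h₂ ⊢
  linear_combination (norm := abel) -h₁ - h₂

theorem isFManifold_of_isTorsionFree_of_isCompatible {e : V}
    (hcomm : ∀ X Y, m X Y = m Y X) (hassoc : ∀ X Y Z, m (m X Y) Z = m X (m Y Z))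
    (hunit : ∀ X, m e X = X) (htf : IsTorsionFree n) (hc : IsCompatible n (m · ·)) :
    IsFManifold R (m · ·) e where
  add_left X Y Z := by simp only [map_add, LinearMap.add_apply]
  smul_left f X Y := by simp only [map_smul, LinearMap.smul_apply]
  comm := hcomm
  assoc := hassoc
  unit := hunit
  hertling_manin := lieDerivMul_mul hcomm hassoc htf hc

end Hertling

theorem statement17_general {R V E : Type*} [CommRing R] [LieRing V] [Module R V]
    [AddCommGroup E] [Module R E]
    (D : V → E → E)
    (A : V → E →ₗ[R] E)
    (hA_add : ∀ X Y : V, A (X + Y) = A X + A Y)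
    (hA_smul : ∀ (f : R) (X : V), A (f • X) = f • A X)
    (hdDA : ∀ (X Y : V) (w : E),
      D X (A Y w) - A Y (D X w) - (D Y (A X w) - A X (D Y w)) - A ⁅X, Y⁆ w = 0)
    (hAcomm : ∀ (X Y : V) (w : E), A X (A Y w) = A Y (A X w))
    (u : E) (hu : ∀ Y Z : V, A Y (D Z u) = A Z (D Y u))
    (F : V ≃ₗ[R] E) (hF : ∀ X : V, F X = A X u) :
    ∃ mult : V → V → V,
      (∀ X Y : V, mult X Y = F.symm (A X (A Y u))) ∧
      (∀ X Y : V, mult X Y = mult Y X) ∧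
      (∀ X Y Z : V, mult (mult X Y) Z = mult X (mult Y Z)) ∧
      (∀ X : V, mult (F.symm u) X = X) ∧
      IsTorsionFree (fun X Y => F.symm (D X (F Y))) ∧
      IsCompatible (fun X Y => F.symm (D X (F Y))) mult ∧
      IsFManifold R mult (F.symm u) := by
  let A' : V →ₗ[R] E →ₗ[R] E := ⟨⟨A, hA_add⟩, hA_smul⟩
  have hcomm := pullbackMul_comm (A := A') hAcomm hF
  have hassoc := pullbackMul_assoc (A := A') hAcomm hF
  have hunit := pullbackMul_symm_left (A := A') hAcomm hF
  have htf := isTorsionFree_pullbackConn (A := A') D hdDA hu hF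
  have hc := isCompatible_pullbackConn (A := A') D hdDA hAcomm hu hF
  exact ⟨(pullbackMul A' F · ·), fun X Y => congrArg F.symm (congrArg (A X) (hF Y)),
    hcomm, hassoc, hunit, htf, hc,
    isFManifold_of_isTorsionFree_of_isCompatible hcomm hassoc hunit htf hc⟩

/-- **Proposition 9.1.** Let `E → M` be an external vector
bundle with a connection `D`, an `End(E)`-valued `1`-form `A` with `d^D A = 0`
and `A_X A_Y = A_Y A_X`, and a section `u` with `A_Y(D_Z u) = A_Z(D_Y u)`, such
that `F(X) := A_X(u)` is a bundle isomorphism `TM → E`. Then the multiplication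
`X∘Y := F⁻¹(A_X A_Y u)` is commutative and associative with unit `F⁻¹(u)`, the
pull-back connection `(F*D)_X(Y) := F⁻¹(D_X(F(Y)))` is torsion-free and
compatible with `∘`, and `(M, ∘, F⁻¹(u))` is an F-manifold. -/
theorem statement17 {R V E : Type*} [CommRing R] [LieRing V] [Module R V]
    [AddCommGroup E] [Module R E]
    (S : SmoothSetting R V)
    (D : V → E → E)
    (hD_addl : ∀ (X Y : V) (w : E), D (X + Y) w = D X w + D Y w)
    (hD_smull : ∀ (f : R) (X : V) (w : E), D (f • X) w = f • D X w)
    (hD_addr : ∀ (X : V) (w w' : E), D X (w + w') = D X w + D X w')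
    (hD_leib : ∀ (X : V) (f : R) (w : E), D X (f • w) = S.deriv X f • w + f • D X w)
    (A : V → E →ₗ[R] E)
    (hA_add : ∀ X Y : V, A (X + Y) = A X + A Y)
    (hA_smul : ∀ (f : R) (X : V), A (f • X) = f • A X)
    (hdDA : ∀ (X Y : V) (w : E),
      D X (A Y w) - A Y (D X w) - (D Y (A X w) - A X (D Y w)) - A ⁅X, Y⁆ w = 0)
    (hAcomm : ∀ (X Y : V) (w : E), A X (A Y w) = A Y (A X w))
    (u : E) (hu : ∀ Y Z : V, A Y (D Z u) = A Z (D Y u))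
    (F : V ≃ₗ[R] E) (hF : ∀ X : V, F X = A X u) :
    ∃ mult : V → V → V,
      (∀ X Y : V, mult X Y = F.symm (A X (A Y u))) ∧
      (∀ X Y : V, mult X Y = mult Y X) ∧
      (∀ X Y Z : V, mult (mult X Y) Z = mult X (mult Y Z)) ∧
      (∀ X : V, mult (F.symm u) X = X) ∧
      IsTorsionFree (fun X Y => F.symm (D X (F Y))) ∧
      IsCompatible (fun X Y => F.symm (D X (F Y))) mult ∧
      IsFManifold R mult (F.symm u) :=
  statement17_general D A hA_add hA_smul hdDA hAcomm u hu F hF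
end

section
/- Let (M, ∘, e) be an F-manifold with a special family of connections S̃ and a Legendre field u, and let L_u(S̃) := { L_u(∇̃) : ∇̃ ∈ S̃ } where L_u(∇̃)_X(Y) := u^{-1}∘∇̃_X(u∘Y). Then: (i) L_u(S̃) is a special family on (M, ∘, e); (ii) if some (equivalently any) ∇̃ ∈ S̃ satisfies V∘R^∇̃_{Z,Y}X + Y∘R^∇̃_{V,Z}X + Z∘R^∇̃_{Y,V}X = 0 for all X, Y, Z, V, then every connection in L_u(S̃) satisfies the same condition; (iii) if S̃ contains a flat connection, then so does L_u(S̃). -/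
section Statement18Aux

variable {R V : Type*} [CommRing R] [LieRing V] [Module R V] {m : V → V → V} {e : V}

lemma st18_m_zero_l (hF : IsFManifold R m e) (X : V) : m 0 X = 0 := by
  have h := hF.smul_left (0 : R) 0 X
  simpa using h

lemma st18_m_zero_r (hF : IsFManifold R m e) (X : V) : m X 0 = 0 := by
  rw [hF.comm, st18_m_zero_l hF]

lemma st18_m_add_r (hF : IsFManifold R m e) (X A B : V) :
    m X (A + B) = m X A + m X B := by
  rw [hF.comm X (A + B), hF.add_left, hF.comm A X, hF.comm B X]

lemma st18_m_sub_l (hF : IsFManifold R m e) (A B X : V) :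
    m (A - B) X = m A X - m B X := by
  have h := hF.add_left (A - B) B X
  rw [sub_add_cancel] at h
  exact eq_sub_of_add_eq h.symm

lemma st18_m_sub_r (hF : IsFManifold R m e) (X A B : V) :
    m X (A - B) = m X A - m X B := by
  rw [hF.comm X (A - B), st18_m_sub_l hF, hF.comm A X, hF.comm B X]

lemma st18_m_smul_r (hF : IsFManifold R m e) (f : R) (X Y : V) :
    m X (f • Y) = f • m X Y := by
  rw [hF.comm X (f • Y), hF.smul_left, hF.comm Y X]

lemma st18_mrot (hF : IsFManifold R m e) (a b q : V) :
    m a (m b q) = m b (m a q) := by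
  rw [← hF.assoc, hF.comm a b, hF.assoc]

lemma st18_shuf4 (hF : IsFManifold R m e) (a p b x : V) :
    m a (m (m p b) x) = m b (m (m p a) x) := by
  calc m a (m (m p b) x) = m (m a (m p b)) x := (hF.assoc a (m p b) x).symm
    _ = m (m p (m a b)) x := by rw [st18_mrot hF a p b]
    _ = m (m p (m b a)) x := by rw [hF.comm a b]
    _ = m (m b (m p a)) x := by rw [st18_mrot hF p b a]
    _ = m b (m (m p a) x) := hF.assoc b (m p a) x

lemma st18_expand (nt : V → V → V) (X A B : V) :
    nt X (m A B) = covMul nt m X A B + m (nt X A) B + m A (nt X B) := by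
  unfold covMul; abel

lemma st18_L3 (hF : IsFManifold R m e) (nt : V → V → V) (X A B Z : V) :
    covMul nt m X (m A B) Z
      = covMul nt m X A (m B Z) - m (covMul nt m X A B) Z
        + m A (covMul nt m X B Z) := by
  simp only [covMul]
  simp only [st18_m_sub_l hF, st18_m_sub_r hF]
  rw [hF.assoc A B Z, hF.assoc A B (nt X Z), ← hF.assoc (nt X A) B Z,
    ← hF.assoc A (nt X B) Z]
  abel

lemma st18_pair (hF : IsFManifold R m e) {nt : V → V → V}
    (hcomp : IsCompatible nt m) (W B C X : V) :
    covMul nt m B (m W C) X - covMul nt m C (m W B) X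
      = m C (covMul nt m B X W) - m B (covMul nt m C X W) := by
  have h1 := st18_L3 hF nt B W C X
  have h1' := st18_L3 hF nt C W B X
  have h3 : covMul nt m B W (m C X) = covMul nt m B (m C X) W :=
    (hcomp B W (m C X)).2
  have h3' : covMul nt m C W (m B X) = covMul nt m C (m B X) W :=
    (hcomp C W (m B X)).2
  have h2 := st18_L3 hF nt B C X W
  have h2' := st18_L3 hF nt C B X W
  rw [h1, h1', h3, h3', h2, h2']
  have s1 : covMul nt m C B (m X W) = covMul nt m B C (m X W) := (hcomp C B (m X W)).1
  have s2 : covMul nt m C B X = covMul nt m B C X := (hcomp C B X).1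
  have s3 : covMul nt m C W B = covMul nt m B W C := by
    calc covMul nt m C W B = covMul nt m W C B := (hcomp C W B).1
      _ = covMul nt m W B C := (hcomp W C B).2
      _ = covMul nt m B W C := (hcomp W B C).1
  rw [s1, s2, s3]
  abel

lemma st18_D (hF : IsFManifold R m e) {S : SmoothSetting R V} {nt : V → V → V}
    (hc : IsConnection S nt) (htf : IsTorsionFree nt) (hcomp : IsCompatible nt m)
    (W A B X : V) :
    curv (fun P Q => nt P Q + m (m W P) Q) A B X
      = curv nt A B X + (covMul nt m A (m W B) X - covMul nt m B (m W A) X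
          + m (m (nt A W) B) X - m (m (nt B W) A) X) := by
  simp only [curv]
  rw [hc.add_right A (nt B X) (m (m W B) X), hc.add_right B (nt A X) (m (m W A) X)]
  rw [st18_m_add_r hF (m W A) (nt B X) (m (m W B) X),
    st18_m_add_r hF (m W B) (nt A X) (m (m W A) X)]
  rw [st18_expand nt A (m W B) X, st18_expand nt B (m W A) X,
    st18_expand nt A W B, st18_expand nt B W A]
  simp only [hF.add_left]
  have hWW : m (m W A) (m (m W B) X) = m (m W B) (m (m W A) X) := by
    rw [← hF.assoc (m W A) (m W B) X, ← hF.assoc (m W B) (m W A) X,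
      hF.comm (m W A) (m W B)]
  have hcW : covMul nt m B W A = covMul nt m A W B := by
    calc covMul nt m B W A = covMul nt m W B A := (hcomp B W A).1
      _ = covMul nt m W A B := (hcomp W B A).2
      _ = covMul nt m A W B := (hcomp W A B).1
  have hT : m (m W ⁅A, B⁆) X = m (m W (nt A B)) X - m (m W (nt B A)) X := by
    rw [← st18_m_sub_l hF, ← st18_m_sub_r hF, htf A B]
  rw [hWW, hcW, hT]
  abel

lemma st18_inv (hF : IsFManifold R m e) {S : SmoothSetting R V} {nt : V → V → V}
    (hc : IsConnection S nt) (htf : IsTorsionFree nt) (hcomp : IsCompatible nt m)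
    (W X Y Z P : V) :
    m P (curv (fun A B => nt A B + m (m W A) B) Z Y X)
      + m Y (curv (fun A B => nt A B + m (m W A) B) P Z X)
      + m Z (curv (fun A B => nt A B + m (m W A) B) Y P X)
      = m P (curv nt Z Y X) + m Y (curv nt P Z X) + m Z (curv nt Y P X) := by
  rw [st18_D hF hc htf hcomp W Z Y X, st18_D hF hc htf hcomp W P Z X,
    st18_D hF hc htf hcomp W Y P X]
  rw [st18_pair hF hcomp W Z Y X, st18_pair hF hcomp W P Z X,
    st18_pair hF hcomp W Y P X]
  simp only [st18_m_add_r hF, st18_m_sub_r hF]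
  rw [st18_mrot hF P Y (covMul nt m Z X W),
    st18_mrot hF Z P (covMul nt m Y X W),
    st18_mrot hF Y Z (covMul nt m P X W),
    st18_shuf4 hF P (nt Z W) Y X,
    st18_shuf4 hF P (nt Y W) Z X,
    st18_shuf4 hF Y (nt P W) Z X]
  abel

lemma st18_conj (hF : IsFManifold R m e) {u uinv : V} (huinv : m u uinv = e)
    (nt' : V → V → V) (X Y Z : V) :
    curv (fun A B => m uinv (nt' A (m u B))) X Y Z
      = m uinv (curv nt' X Y (m u Z)) := by
  have cancel : ∀ q : V, m u (m uinv q) = q := fun q => by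
    rw [← hF.assoc, huinv, hF.unit]
  simp only [curv]
  rw [cancel (nt' Y (m u Z)), cancel (nt' X (m u Z))]
  rw [← st18_m_sub_r hF uinv, ← st18_m_sub_r hF uinv]

end Statement18Aux

/-- **Proposition 9.5.** Let `(M, ∘, e)` be an F-manifold with a
special family `S̃` and a Legendre field `u` (invertible, with
`∇̃_X(u)∘Y = ∇̃_Y(u)∘X` for the connections `∇̃ ∈ S̃`). Then the Legendre
transformation `L_u(S̃)`, with `L_u(∇̃)_X(Y) = u⁻¹∘∇̃_X(u∘Y)`, is a special
family on `(M, ∘, e)`; if some connection of `S̃` satisfies the curvature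
condition `V∘R_{Z,Y}X + Y∘R_{V,Z}X + Z∘R_{Y,V}X = 0` then every connection of
`L_u(S̃)` does; and if `S̃` contains a flat connection then so does
`L_u(S̃)`. -/
theorem statement18 {R V : Type*} [CommRing R] [LieRing V] [Module R V]
    (S : SmoothSetting R V) (m : V → V → V) (e : V)
    (hF : IsFManifold R m e)
    (SF : Set (V → V → V)) (hSF : IsSpecialFamily S m SF)
    (u uinv : V) (huinv : m u uinv = e)
    (hleg : ∀ nt ∈ SF, ∀ X Y : V, m (nt X u) Y = m (nt Y u) X) :
    IsSpecialFamily S m (legFamily m uinv u SF) ∧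
      ((∃ nt ∈ SF, CurvCircCond m nt) →
        ∀ nd ∈ legFamily m uinv u SF, CurvCircCond m nd) ∧
      ((∃ nt ∈ SF, IsFlat nt) → ∃ nd ∈ legFamily m uinv u SF, IsFlat nd) := by
  obtain ⟨nt, hc, htf, hcomp, hSFeq⟩ := hSF
  have cancel : ∀ q : V, m u (m uinv q) = q := fun q => by
    rw [← hF.assoc, huinv, hF.unit]
  have cancel' : ∀ q : V, m uinv (m u q) = q := fun q => by
    rw [← hF.assoc, hF.comm uinv u, huinv, hF.unit]
  have cancel3 : ∀ p q : V, m uinv (m p (m u q)) = m p q := fun p q => by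
    rw [st18_mrot hF p u q, cancel']
  have hntSF : nt ∈ SF := by
    rw [hSFeq]
    refine ⟨0, ?_⟩
    funext X Y
    rw [st18_m_zero_l hF, st18_m_zero_l hF, add_zero]
  have hlegnt := hleg nt hntSF
  -- membership description of the Legendre family
  have hmem : ∀ n, n ∈ legFamily m uinv u SF ↔
      ∃ W, n = fun X Y => m uinv (nt X (m u Y)) + m (m W X) Y := by
    intro n
    constructor
    · rintro ⟨nt', hnt', rfl⟩
      rw [hSFeq] at hnt'
      obtain ⟨W, rfl⟩ := hnt'
      refine ⟨W, ?_⟩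
      funext X Y
      show m uinv (nt X (m u Y) + m (m W X) (m u Y)) = _
      rw [st18_m_add_r hF, cancel3]
    · rintro ⟨W, rfl⟩
      refine ⟨fun A B => nt A B + m (m W A) B, ?_, ?_⟩
      · rw [hSFeq]; exact ⟨W, rfl⟩
      · funext X Y
        show _ = m uinv (nt X (m u Y) + m (m W X) (m u Y))
        rw [st18_m_add_r hF, cancel3]
  -- the transformed base connection
  have hconn : IsConnection S (fun X Y => m uinv (nt X (m u Y))) := by
    constructor
    · intro X Y Z
      show m uinv (nt (X + Y) (m u Z)) = _
      rw [hc.add_left, st18_m_add_r hF]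
    · intro f X Y
      show m uinv (nt (f • X) (m u Y)) = _
      rw [hc.smul_left, st18_m_smul_r hF]
    · intro X Y Z
      show m uinv (nt X (m u (Y + Z))) = _
      rw [st18_m_add_r hF u, hc.add_right, st18_m_add_r hF]
    · intro X f Y
      show m uinv (nt X (m u (f • Y))) = _
      rw [st18_m_smul_r hF f u Y, hc.leibniz, st18_m_add_r hF,
        st18_m_smul_r hF, st18_m_smul_r hF, cancel']
  have htf' : IsTorsionFree (fun X Y => m uinv (nt X (m u Y))) := by
    intro X Y
    show m uinv (nt X (m u Y)) - m uinv (nt Y (m u X)) = ⁅X, Y⁆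
    have key : nt X (m u Y) - nt Y (m u X) = m u ⁅X, Y⁆ := by
      rw [st18_expand nt X u Y, st18_expand nt Y u X]
      have s : covMul nt m X u Y = covMul nt m Y u X := by
        calc covMul nt m X u Y = covMul nt m u X Y := (hcomp X u Y).1
          _ = covMul nt m u Y X := (hcomp u X Y).2
          _ = covMul nt m Y u X := (hcomp u Y X).1
      rw [s, hlegnt X Y]
      have t : m u (nt X Y) - m u (nt Y X) = m u ⁅X, Y⁆ := by
        rw [← st18_m_sub_r hF u, htf X Y]
      rw [← t]; abel
    rw [← st18_m_sub_r hF uinv, key, cancel']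
  -- the key formula for the covariant derivative of `m` w.r.t. the new connection
  have hinner : ∀ X Y Z : V, covMul (fun A B => m uinv (nt A (m u B))) m X Y Z
      = m uinv (covMul nt m X Y (m u Z) - m (covMul nt m X Y u) Z
          - m Y (m (nt X u) Z)) := by
    intro X Y Z
    have lhs_eq : covMul (fun A B => m uinv (nt A (m u B))) m X Y Z
        = m uinv (nt X (m u (m Y Z))) - m (m uinv (nt X (m u Y))) Z
          - m Y (m uinv (nt X (m u Z))) := rfl
    rw [lhs_eq, hF.assoc uinv (nt X (m u Y)) Z,
      st18_mrot hF Y uinv (nt X (m u Z)),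
      ← st18_m_sub_r hF uinv, ← st18_m_sub_r hF uinv]
    refine congrArg (m uinv) ?_
    rw [show m u (m Y Z) = m Y (m u Z) from st18_mrot hF u Y Z]
    rw [st18_expand nt X Y (m u Z), st18_expand nt X u Y]
    simp only [hF.add_left]
    have q1 : m (nt X Y) (m u Z) = m (m u (nt X Y)) Z := by
      rw [hF.assoc u (nt X Y) Z, st18_mrot hF (nt X Y) u Z]
    have q2 : m (m (nt X u) Y) Z = m Y (m (nt X u) Z) := by
      rw [hF.assoc (nt X u) Y Z, st18_mrot hF (nt X u) Y Z]
    have q3 : covMul nt m X u Y = covMul nt m X Y u := (hcomp X u Y).2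
    rw [q1, q2, q3]
    abel
  have hcompat : IsCompatible (fun A B => m uinv (nt A (m u B))) m := by
    intro X Y Z
    constructor
    · rw [hinner X Y Z, hinner Y X Z]
      refine congrArg (m uinv) ?_
      have s1 : covMul nt m X Y (m u Z) = covMul nt m Y X (m u Z) :=
        (hcomp X Y (m u Z)).1
      have s2 : covMul nt m X Y u = covMul nt m Y X u := (hcomp X Y u).1
      have s3 : m Y (m (nt X u) Z) = m X (m (nt Y u) Z) := by
        rw [← hF.assoc Y (nt X u) Z, ← hF.assoc X (nt Y u) Z,
          hF.comm Y (nt X u), hF.comm X (nt Y u), hlegnt X Y]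
      rw [s1, s2, s3]
    · rw [hinner X Y Z, hinner X Z Y]
      refine congrArg (m uinv) ?_
      have a1 : covMul nt m X Y (m u Z)
          = covMul nt m X u (m Z Y) - m (covMul nt m X u Z) Y
            + m u (covMul nt m X Z Y) := by
        calc covMul nt m X Y (m u Z) = covMul nt m X (m u Z) Y :=
              (hcomp X Y (m u Z)).2
          _ = _ := st18_L3 hF nt X u Z Y
      have a2 : covMul nt m X Z (m u Y)
          = covMul nt m X u (m Y Z) - m (covMul nt m X u Y) Z
            + m u (covMul nt m X Y Z) := by
        calc covMul nt m X Z (m u Y) = covMul nt m X (m u Y) Z :=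
              (hcomp X Z (m u Y)).2
          _ = _ := st18_L3 hF nt X u Y Z
      have b1 : covMul nt m X Y u = covMul nt m X u Y := (hcomp X Y u).2
      have b2 : covMul nt m X Z u = covMul nt m X u Z := (hcomp X Z u).2
      have c1 : covMul nt m X u (m Z Y) = covMul nt m X u (m Y Z) := by
        rw [hF.comm Z Y]
      have c2 : covMul nt m X Z Y = covMul nt m X Y Z := (hcomp X Z Y).2
      have c3 : m Y (m (nt X u) Z) = m Z (m (nt X u) Y) := by
        rw [st18_mrot hF Y (nt X u) Z, st18_mrot hF Z (nt X u) Y, hF.comm Y Z]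
      rw [a1, a2, b1, b2, c1, c2, c3]
      abel
  refine ⟨⟨fun A B => m uinv (nt A (m u B)), hconn, htf', hcompat, ?_⟩, ?_, ?_⟩
  · ext n
    exact hmem n
  · -- curvature condition
    rintro ⟨nt1, hnt1, hCC1⟩ nd' hnd'
    obtain ⟨nt2, hnt2, rfl⟩ := hnd'
    rw [hSFeq] at hnt1 hnt2
    obtain ⟨W1, rfl⟩ := hnt1
    obtain ⟨W2, rfl⟩ := hnt2
    have hCC0 : CurvCircCond m nt := by
      intro X Y Z Wv
      rw [← st18_inv hF hc htf hcomp W1 X Y Z Wv]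
      exact hCC1 X Y Z Wv
    have hCC2 : CurvCircCond m (fun A B => nt A B + m (m W2 A) B) := by
      intro X Y Z Wv
      rw [st18_inv hF hc htf hcomp W2 X Y Z Wv]
      exact hCC0 X Y Z Wv
    intro X Y Z Wv
    rw [st18_conj hF huinv (fun A B => nt A B + m (m W2 A) B) Z Y X,
      st18_conj hF huinv (fun A B => nt A B + m (m W2 A) B) Wv Z X,
      st18_conj hF huinv (fun A B => nt A B + m (m W2 A) B) Y Wv X]
    rw [st18_mrot hF Wv uinv (curv (fun A B => nt A B + m (m W2 A) B) Z Y (m u X)),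
      st18_mrot hF Y uinv (curv (fun A B => nt A B + m (m W2 A) B) Wv Z (m u X)),
      st18_mrot hF Z uinv (curv (fun A B => nt A B + m (m W2 A) B) Y Wv (m u X))]
    rw [← st18_m_add_r hF uinv, ← st18_m_add_r hF uinv]
    rw [hCC2 (m u X) Y Z Wv, st18_m_zero_r hF]
  · -- flatness
    rintro ⟨nt1, hnt1, hflat⟩
    refine ⟨fun A B => m uinv (nt1 A (m u B)), ⟨nt1, hnt1, rfl⟩, ?_⟩
    intro X Y Z
    rw [st18_conj hF huinv nt1 X Y Z, hflat X Y (m u Z), st18_m_zero_r hF]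
end

section
/- Let (M, ∘, e) be an F-manifold with a special family of connections S̃ and a Legendre field u, let ε be an eventual identity with dual multiplication X*Y := X∘Y∘ε^{-1}, and let S = D_ε(S̃) be the dual special family on (M, *, ε). Then ε∘u is a Legendre field on the dual F-manifold (M, *, ε) with special family S, and the Legendre transformation of S by ε∘u (taken with respect to *) equals the dual of the Legendre transformation of S̃ by u, i.e. L_{ε∘u}(S) = D_ε( L_u(S̃) ). -/
/-- **Theorem 9.6.** Let `(M, ∘, e)` be an F-manifold with a
special family `S̃` and a Legendre field `u`, let `ε` be an eventual identity
with dual multiplication `*`, and let `S = D_ε(S̃)`. Then `ε∘u` is a Legendre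
field on the dual F-manifold `(M, *, ε)` with special family `S` (its
`*`-inverse being `u⁻¹∘ε`), and `L_{ε∘u}(S) = D_ε(L_u(S̃))`. -/
theorem statement19 {R V : Type*} [CommRing R] [LieRing V] [Module R V]
    (S : SmoothSetting R V) (m : V → V → V) (e ε εinv : V)
    (hF : IsFManifold R m e) (hev : IsEventualIdentity R m e ε εinv)
    (SF : Set (V → V → V)) (hSF : IsSpecialFamily S m SF)
    (u uinv : V) (huinv : m u uinv = e)
    (hleg : ∀ nt ∈ SF, ∀ X Y : V, m (nt X u) Y = m (nt Y u) X) :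
    dualMul m εinv (m ε u) (m uinv ε) = ε ∧
      (∀ nd ∈ dualFamilyOfSet m ε εinv SF, ∀ X Y : V,
        dualMul m εinv (nd X (m ε u)) Y = dualMul m εinv (nd Y (m ε u)) X) ∧
      legFamily (dualMul m εinv) (m uinv ε) (m ε u)
          (dualFamilyOfSet m ε εinv SF) =
        dualFamilyOfSet m ε εinv (legFamily m uinv u SF) := by
  obtain ⟨hε0, hFd⟩ := hev
  obtain ⟨nt0, hconn0, htf0, hcomp0, hSFeq⟩ := hSF
  -- V as a commutative ring with multiplication m and unit e
  have h0 : ∀ c : V, m 0 c = 0 := by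
    intro c
    have h := hF.add_left 0 0 c
    rw [add_zero] at h
    exact (left_eq_add.mp h)
  letI : CommRing V :=
    { (inferInstance : AddCommGroup V) with
      mul := m, one := e,
      mul_assoc := hF.assoc, one_mul := hF.unit,
      mul_one := fun a => (hF.comm a e).trans (hF.unit a)
      mul_comm := hF.comm
      left_distrib := fun a b c => by
        show m a (b + c) = m a b + m a c
        rw [hF.comm a (b + c), hF.add_left, hF.comm b a, hF.comm c a]
      right_distrib := fun a b c => hF.add_left a b c
      zero_mul := h0
      mul_zero := fun a => (hF.comm a 0).trans (h0 a) }
  have hm : ∀ a b : V, m a b = a * b := fun _ _ => rfl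
  have he : e = (1 : V) := rfl
  have hε : ε * εinv = 1 := hε0
  have hu : u * uinv = 1 := huinv
  have hsk : ∀ a b : V, ⁅a, b⁆ + ⁅b, a⁆ = 0 := by
    intro a b; rw [← lie_skew a b]; abel
  -- L_ε(*) = 0 (from the Hertling–Manin condition of the dual product)
  have hstar : ∀ Z W : V, ⁅ε, Z * W * εinv⁆ =
      ⁅ε, Z⁆ * W * εinv + Z * ⁅ε, W⁆ * εinv := by
    intro Z W
    have hεε : dualMul m εinv ε ε = ε := by
      simp only [dualMul, hm]; linear_combination ε * hε
    have hHM := hFd.hertling_manin ε ε Z W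
    rw [hεε] at hHM
    simp only [dualMul, hm] at hHM
    linear_combination (-1 : V) * hHM
      - 2 * (⁅ε, Z * W * εinv⁆ - ⁅ε, Z⁆ * W * εinv - Z * ⁅ε, W⁆ * εinv) * hε
  -- the Lie derivative formula L_ε(∘)(X,Y) = [e,ε]∘X∘Y
  have hLe : ∀ X Y : V, ⁅ε, X * Y⁆ =
      ⁅ε, X⁆ * Y + X * ⁅ε, Y⁆ + ⁅(1 : V), ε⁆ * X * Y := by
    have h2 : ∀ X : V, ⁅ε, X⁆ =
        ⁅ε, ε * X⁆ * (1 : V) * εinv + ε * X * ⁅ε, (1 : V)⁆ * εinv := by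
      intro X
      have h := hstar (ε * X) 1
      rw [show ε * X * 1 * εinv = X from by linear_combination X * hε] at h
      exact h
    intro X Y
    have h3 := hstar X (ε * Y)
    rw [show X * (ε * Y) * εinv = X * Y from by
      linear_combination X * Y * hε] at h3
    linear_combination h3 - X * (h2 Y)
      + (⁅ε, X⁆ * Y - X * Y * ⁅ε, (1 : V)⁆) * hε - X * Y * hsk 1 ε
  -- the key T-lemma for members of the special family
  have hT : ∀ nt ∈ SF, ∀ P : V,
      nt P (u * ε) = nt (u * P) ε + (⁅(1 : V), ε⁆ * u + ⁅ε, u⁆) * P := by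
    intro nt hnt P
    have hlegnt := hleg nt hnt P ε
    rw [hSFeq] at hnt
    obtain ⟨A, rfl⟩ := hnt
    simp only [hm] at hlegnt ⊢
    have h1 := (hcomp0 P u ε).1
    have h2 := (hcomp0 u P ε).2
    have h3 := (hcomp0 u ε P).1
    simp only [covMul, hm] at h1 h2 h3
    have h4 := htf0 P ε
    have h5 := htf0 ε (u * P)
    have h6 := hLe u P
    linear_combination h1 + h2 + h3 + hlegnt + u * h4 + h5 + h6 + u * hsk P ε
  refine ⟨?_, ?_, ?_⟩
  · -- ε∘u is invertible with *-inverse u⁻¹∘ε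
    simp only [dualMul, hm]
    linear_combination (ε * ε * εinv) * hu + ε * hε
  · -- ε∘u is a Legendre field for the dual family
    rintro nd ⟨nt, hnt, W, rfl⟩ X Y
    have hlegnt := hleg nt hnt X Y
    simp only [hm] at hlegnt
    simp only [dualConn, dualMul, hm]
    rw [show εinv * (ε * u) = u from by linear_combination u * hε]
    linear_combination (ε * εinv) * hlegnt
  · -- L_{ε∘u}(S) = D_ε(L_u(S̃))
    ext n
    simp only [legFamily, dualFamilyOfSet, Set.mem_setOf_eq]
    constructor
    · rintro ⟨nd, ⟨nt, hnt, W, rfl⟩, rfl⟩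
      refine ⟨fun X Y => m uinv (nt X (m u Y)), ⟨nt, hnt, rfl⟩,
        W + uinv * (⁅(1 : V), ε⁆ * u + ⁅ε, u⁆) * ε, ?_⟩
      funext X Y
      simp only [dualConn, dualMul, hm]
      rw [show εinv * (ε * u * Y * εinv) = u * (εinv * Y) from by
        linear_combination u * Y * εinv * hε]
      have hTY := hT nt hnt (εinv * Y)
      linear_combination
        (uinv * ε * (nt X (u * (εinv * Y))) - uinv * X * (nt (u * (εinv * Y)) ε)
          - uinv * ⁅(1 : V), ε⁆ * u * X * Y * εinv - uinv * ⁅ε, u⁆ * X * Y * εinv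
          + W * X * Y * εinv ^ 2 * (ε * εinv + 1)) * hε
        + (W * X * Y * ε ^ 2 * εinv ^ 4) * hu
        + (uinv * X) * hTY
    · rintro ⟨nl, ⟨nt, hnt, rfl⟩, W', rfl⟩
      refine ⟨dualConn m ε εinv nt (W' - uinv * (⁅(1 : V), ε⁆ * u + ⁅ε, u⁆) * ε),
        ⟨nt, hnt, W' - uinv * (⁅(1 : V), ε⁆ * u + ⁅ε, u⁆) * ε, rfl⟩, ?_⟩
      funext X Y
      simp only [dualConn, dualMul, hm]
      rw [show εinv * (ε * u * Y * εinv) = u * (εinv * Y) from by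
        linear_combination u * Y * εinv * hε]
      have hTY := hT nt hnt (εinv * Y)
      linear_combination
        -((uinv * ε * (nt X (u * (εinv * Y))) - uinv * X * (nt (u * (εinv * Y)) ε)
          - uinv * ⁅(1 : V), ε⁆ * u * X * Y * εinv - uinv * ⁅ε, u⁆ * X * Y * εinv
          + (W' - uinv * (⁅(1 : V), ε⁆ * u + ⁅ε, u⁆) * ε) * X * Y * εinv ^ 2 * (ε * εinv + 1)) * hε
        + ((W' - uinv * (⁅(1 : V), ε⁆ * u + ⁅ε, u⁆) * ε) * X * Y * ε ^ 2 * εinv ^ 4) * hu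
        + (uinv * X) * hTY)
end
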